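/- arXiv:2604.14813 — 5 statements merged into one kernel-verified Lean document; each statement's English description precedes it below -/
import Mathlib

section
/- Let A ∈ Mₙ(ℍ) be partitioned into four blocks A = [[A₁₁, A₁₂],[A₂₁, A₂₂]] with Aᵢⱼ of size nᵢ × nⱼ, n₁ + n₂ = n, and let Ã be the 2×2 real matrix whose (i,j) entry is ‖Aᵢⱼ‖₂. Then ‖A‖₂ ≤ ‖Ã‖₂. -/
open scoped Matrix Quaternion BigOperators

noncomputable section

/-- Euclidean norm of a vector with entries in a normed ring (e.g. the quaternions). -/
def qVecNorm {R : Type*} [NormedRing R] {n : Type*} [Fintype n] (x : n → R) : ℝ :=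
  Real.sqrt (∑ i, ‖x i‖ ^ 2)

/-- Operator 2-norm (spectral norm) of a matrix over a normed ring. -/
def qSpecNorm {R : Type*} [NormedRing R] {m n : Type*} [Fintype m] [Fintype n]
    (A : Matrix m n R) : ℝ :=
  sSup {c : ℝ | ∃ x : n → R, x ≠ 0 ∧ c = qVecNorm (A.mulVec x) / qVecNorm x}

/-- `μ` is a right eigenvalue of the quaternionic matrix `A`. -/
def RightEig {n : Type*} [Fintype n] (A : Matrix n n ℍ[ℝ]) (μ : ℍ[ℝ]) : Prop :=
  ∃ x : n → ℍ[ℝ], x ≠ 0 ∧ A.mulVec x = fun i => x i * μ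

/-- Right spectral radius of a quaternionic matrix. -/
def rSpecRad {n : Type*} [Fintype n] (A : Matrix n n ℍ[ℝ]) : ℝ :=
  sSup {r : ℝ | ∃ μ : ℍ[ℝ], RightEig A μ ∧ r = ‖μ‖}

/-- Spectral radius of a real 2×2 matrix. -/
def realSpecRad (B : Matrix (Fin 2) (Fin 2) ℝ) : ℝ :=
  sSup {r : ℝ | ∃ μ ∈ spectrum ℝ B, r = |μ|}

/-!
Write `x = (x₁, x₂)` according to the partition. Each block row satisfies
`‖Aᵢ₁ x₁ + Aᵢ₂ x₂‖ ≤ ‖Aᵢ₁‖ ‖x₁‖ + ‖Aᵢ₂‖ ‖x₂‖`, so `‖A x‖` is at most the Euclidean norm of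
`Ã (‖x₁‖, ‖x₂‖)`, hence at most `‖Ã‖ ‖(‖x₁‖, ‖x₂‖)‖ = ‖Ã‖ ‖x‖`.
-/

section

variable {R S : Type*} [NormedRing R] [NormedRing S] {l m n : Type*} [Fintype l] [Fintype m]
  [Fintype n]

lemma qVecNorm_nonneg (x : n → R) : 0 ≤ qVecNorm x := Real.sqrt_nonneg _

lemma qVecNorm_sq (x : n → R) : qVecNorm x ^ 2 = ∑ i, ‖x i‖ ^ 2 :=
  Real.sq_sqrt (Finset.sum_nonneg fun _ _ => sq_nonneg _)

lemma qVecNorm_pos {x : n → R} (hx : x ≠ 0) : 0 < qVecNorm x := by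
  obtain ⟨i, hi⟩ := Function.ne_iff.1 hx
  refine Real.sqrt_pos.2 (lt_of_lt_of_le (pow_pos (norm_pos_iff.2 hi) 2) ?_)
  exact Finset.single_le_sum (f := fun j => ‖x j‖ ^ 2) (fun _ _ => sq_nonneg _)
    (Finset.mem_univ i)

lemma qVecNorm_le_of_norm_le {u : n → R} {v : n → S} (h : ∀ i, ‖u i‖ ≤ ‖v i‖) :
    qVecNorm u ≤ qVecNorm v :=
  Real.sqrt_le_sqrt (Finset.sum_le_sum fun i _ => pow_le_pow_left₀ (norm_nonneg _) (h i) 2)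

lemma qVecNorm_le_of_nonneg_of_le {f g : n → ℝ} (hf : ∀ i, 0 ≤ f i) (h : ∀ i, f i ≤ g i) :
    qVecNorm f ≤ qVecNorm g :=
  qVecNorm_le_of_norm_le fun i => by
    rw [Real.norm_of_nonneg (hf i), Real.norm_of_nonneg ((hf i).trans (h i))]
    exact h i

lemma qVecNorm_norm (x : n → R) : qVecNorm (fun i => ‖x i‖) = qVecNorm x := by
  simp only [qVecNorm, norm_norm]

lemma qVecNorm_eq_norm_toLp (f : n → ℝ) : qVecNorm f = ‖WithLp.toLp 2 f‖ := by
  simp only [qVecNorm, EuclideanSpace.norm_eq]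

lemma qVecNorm_add_le (u v : n → R) : qVecNorm (u + v) ≤ qVecNorm u + qVecNorm v := by
  have hnorm (i : n) : ‖(u + v) i‖ ≤ ‖‖u i‖ + ‖v i‖‖ := by
    rw [Real.norm_of_nonneg (add_nonneg (norm_nonneg (u i)) (norm_nonneg (v i)))]
    exact norm_add_le _ _
  calc qVecNorm (u + v) ≤ qVecNorm (fun i => ‖u i‖ + ‖v i‖) := qVecNorm_le_of_norm_le hnorm
    _ ≤ qVecNorm (fun i => ‖u i‖) + qVecNorm (fun i => ‖v i‖) := by
      simp only [qVecNorm_eq_norm_toLp]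
      exact norm_add_le (WithLp.toLp 2 fun i => ‖u i‖) (WithLp.toLp 2 fun i => ‖v i‖)
    _ = qVecNorm u + qVecNorm v := by rw [qVecNorm_norm, qVecNorm_norm]

lemma qVecNorm_sum_elim (u : l → R) (v : m → R) :
    qVecNorm (Sum.elim u v) = qVecNorm ![qVecNorm u, qVecNorm v] := by
  have hsq : qVecNorm (Sum.elim u v) ^ 2 = qVecNorm ![qVecNorm u, qVecNorm v] ^ 2 := by
    simp only [qVecNorm_sq, Fintype.sum_sum_type, Sum.elim_inl, Sum.elim_inr, Fin.sum_univ_two,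
      Matrix.cons_val_zero, Matrix.cons_val_one, Real.norm_eq_abs, sq_abs]
  exact (pow_left_inj₀ (qVecNorm_nonneg _) (qVecNorm_nonneg _) two_ne_zero).1 hsq

lemma qVecNorm_mulVec_le_frobenius (A : Matrix m n R) (x : n → R) :
    qVecNorm (A *ᵥ x) ≤ Real.sqrt (∑ i, ∑ j, ‖A i j‖ ^ 2) * qVecNorm x := by
  rw [qVecNorm, qVecNorm, ← Real.sqrt_mul (by positivity), Finset.sum_mul]
  refine Real.sqrt_le_sqrt (Finset.sum_le_sum fun i _ => ?_)
  calc ‖(A *ᵥ x) i‖ ^ 2 ≤ (∑ j, ‖A i j‖ * ‖x j‖) ^ 2 := by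
        refine pow_le_pow_left₀ (norm_nonneg _) ?_ 2
        exact (norm_sum_le _ _).trans (Finset.sum_le_sum fun j _ => norm_mul_le _ _)
    _ ≤ (∑ j, ‖A i j‖ ^ 2) * ∑ j, ‖x j‖ ^ 2 := Finset.sum_mul_sq_le_sq_mul_sq _ _ _

lemma bddAbove_qSpecNorm_set (A : Matrix m n R) :
    BddAbove {c : ℝ | ∃ x : n → R, x ≠ 0 ∧ c = qVecNorm (A *ᵥ x) / qVecNorm x} := by
  refine ⟨Real.sqrt (∑ i, ∑ j, ‖A i j‖ ^ 2), ?_⟩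
  rintro c ⟨x, hx, rfl⟩
  rw [div_le_iff₀ (qVecNorm_pos hx)]
  exact qVecNorm_mulVec_le_frobenius A x

lemma qSpecNorm_nonneg (A : Matrix m n R) : 0 ≤ qSpecNorm A :=
  Real.sSup_nonneg fun _ ⟨_, _, hc⟩ => hc ▸ div_nonneg (qVecNorm_nonneg _) (qVecNorm_nonneg _)

lemma qVecNorm_mulVec_le (A : Matrix m n R) (x : n → R) :
    qVecNorm (A *ᵥ x) ≤ qSpecNorm A * qVecNorm x := by
  rcases eq_or_ne x 0 with rfl | hx
  · simp [qVecNorm]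
  · rw [← div_le_iff₀ (qVecNorm_pos hx)]
    exact le_csSup (bddAbove_qSpecNorm_set A) ⟨x, hx, rfl⟩

lemma qSpecNorm_le_of_forall_le {A : Matrix m n R} {c : ℝ} (hc : 0 ≤ c)
    (h : ∀ x, qVecNorm (A *ᵥ x) ≤ c * qVecNorm x) : qSpecNorm A ≤ c := by
  refine Real.sSup_le ?_ hc
  rintro _ ⟨x, hx, rfl⟩
  exact (div_le_iff₀ (qVecNorm_pos hx)).2 (h x)

lemma qVecNorm_mulVec_add_mulVec_le (A : Matrix l m R) (B : Matrix l n R) (u : m → R)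
    (v : n → R) :
    qVecNorm (A *ᵥ u + B *ᵥ v) ≤ qSpecNorm A * qVecNorm u + qSpecNorm B * qVecNorm v :=
  (qVecNorm_add_le _ _).trans (add_le_add (qVecNorm_mulVec_le _ _) (qVecNorm_mulVec_le _ _))

lemma qVecNorm_fromBlocks_mulVec_le {l₁ l₂ : Type*} [Fintype l₁] [Fintype l₂]
    (A₁₁ : Matrix l₁ m R) (A₁₂ : Matrix l₁ n R) (A₂₁ : Matrix l₂ m R) (A₂₂ : Matrix l₂ n R)
    (x : m ⊕ n → R) :
    qVecNorm (Matrix.fromBlocks A₁₁ A₁₂ A₂₁ A₂₂ *ᵥ x) ≤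
      qVecNorm (!![qSpecNorm A₁₁, qSpecNorm A₁₂; qSpecNorm A₂₁, qSpecNorm A₂₂] *ᵥ
        ![qVecNorm (x ∘ Sum.inl), qVecNorm (x ∘ Sum.inr)]) := by
  rw [Matrix.fromBlocks_mulVec, qVecNorm_sum_elim, Matrix.mulVec_fin_two]
  exact qVecNorm_le_of_nonneg_of_le
    (Fin.forall_fin_two.2 ⟨qVecNorm_nonneg _, qVecNorm_nonneg _⟩)
    (Fin.forall_fin_two.2 ⟨qVecNorm_mulVec_add_mulVec_le _ _ _ _,
      qVecNorm_mulVec_add_mulVec_le _ _ _ _⟩)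

end

theorem specNorm_fromBlocks_le (n₁ n₂ : ℕ)
    (A11 : Matrix (Fin n₁) (Fin n₁) ℍ[ℝ]) (A12 : Matrix (Fin n₁) (Fin n₂) ℍ[ℝ])
    (A21 : Matrix (Fin n₂) (Fin n₁) ℍ[ℝ]) (A22 : Matrix (Fin n₂) (Fin n₂) ℍ[ℝ]) :
    qSpecNorm (Matrix.fromBlocks A11 A12 A21 A22) ≤
      qSpecNorm !![qSpecNorm A11, qSpecNorm A12; qSpecNorm A21, qSpecNorm A22] := by
  refine qSpecNorm_le_of_forall_le (qSpecNorm_nonneg _) fun x => ?_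
  calc qVecNorm (Matrix.fromBlocks A11 A12 A21 A22 *ᵥ x)
      ≤ qVecNorm (!![qSpecNorm A11, qSpecNorm A12; qSpecNorm A21, qSpecNorm A22] *ᵥ
          ![qVecNorm (x ∘ Sum.inl), qVecNorm (x ∘ Sum.inr)]) :=
        qVecNorm_fromBlocks_mulVec_le A11 A12 A21 A22 x
    _ ≤ qSpecNorm !![qSpecNorm A11, qSpecNorm A12; qSpecNorm A21, qSpecNorm A22] *
          qVecNorm ![qVecNorm (x ∘ Sum.inl), qVecNorm (x ∘ Sum.inr)] := qVecNorm_mulVec_le _ _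
    _ = qSpecNorm !![qSpecNorm A11, qSpecNorm A12; qSpecNorm A21, qSpecNorm A22] *
          qVecNorm x := by rw [← qVecNorm_sum_elim, Sum.elim_comp_inl_inr]
end
end

section
/- If z ∈ ℍ is a zero of the monic quaternionic polynomial p(μ) = μᵏ + a_{k−1}μ^{k−1} + ⋯ + a₁μ + a₀ (with k ≥ 4), then |z| ≤ ( (1/2)[ ξ₁ + |b_{k−1}| + √((ξ₁ − |b_{k−1}|)² + 4ξ₂√(1 + |a_{k−1}|²)) ] )^{1/2}, where ξ₁ = ( (1/2)[ 1 + Σ_{i=0}^{k−2}|aᵢ|² + √((1 + Σ_{i=0}^{k−2}|aᵢ|²)² − 4(|a₀|² + |a₁|²)) ] )^{1/2}, ξ₂ = (Σ_{i=0}^{k−2}|bᵢ|²)^{1/2}, and bᵢ = a_{k−1}aᵢ − a_{i−1} with a_{−1} = 0. -/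
open scoped Matrix Quaternion BigOperators

noncomputable section

/-- `bᵢ = a_{k-1} aᵢ - a_{i-1}` with `a_{-1} = 0`. -/
def bseq (k : ℕ) (a : ℕ → ℍ[ℝ]) (i : ℕ) : ℍ[ℝ] :=
  a (k - 1) * a i - (if i = 0 then 0 else a (i - 1))

/-- `cᵢ = -a_{k-1} bᵢ + a_{k-2} aᵢ - a_{i-2}` with `a_{-1} = a_{-2} = 0`. -/
def cseq (k : ℕ) (a : ℕ → ℍ[ℝ]) (i : ℕ) : ℍ[ℝ] :=
  -(a (k - 1) * bseq k a i) + a (k - 2) * a i - (if i ≤ 1 then 0 else a (i - 2))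

/-- `z` is a zero of the monic quaternionic polynomial
`p(μ) = μᵏ + a_{k-1}μ^{k-1} + ⋯ + a₀` (coefficients on the left). -/
def IsPolyZero (k : ℕ) (a : ℕ → ℍ[ℝ]) (z : ℍ[ℝ]) : Prop :=
  (∑ i ∈ Finset.range k, a i * z ^ i) + z ^ k = 0

lemma cs_real {ι : Type*} (s : Finset ι) (f g : ι → ℝ) :
    (∑ i ∈ s, f i * g i) ≤ Real.sqrt (∑ i ∈ s, f i ^ 2) * Real.sqrt (∑ i ∈ s, g i ^ 2) := by
  have h := Finset.sum_mul_sq_le_sq_mul_sq s f g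
  have h1 : (∑ i ∈ s, f i * g i) ≤ Real.sqrt ((∑ i ∈ s, f i * g i) ^ 2) := by
    rw [Real.sqrt_sq_eq_abs]; exact le_abs_self _
  refine h1.trans ?_
  rw [← Real.sqrt_mul (by positivity)]
  exact Real.sqrt_le_sqrt h

lemma cs_norm_sum {ι : Type*} (s : Finset ι) (u v : ι → ℍ[ℝ]) :
    ‖∑ i ∈ s, u i * v i‖ ≤ Real.sqrt (∑ i ∈ s, ‖u i‖ ^ 2) * Real.sqrt (∑ i ∈ s, ‖v i‖ ^ 2) := by
  refine (norm_sum_le s _).trans ?_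
  refine le_trans (le_of_eq ?_) (cs_real s (fun i => ‖u i‖) (fun i => ‖v i‖))
  exact Finset.sum_congr rfl fun i _ => norm_mul _ _

lemma tri3 (p n q t : ℝ) (hp : 0 ≤ p) (hq : 0 ≤ q) (ht : 0 ≤ t) :
    Real.sqrt (p + n ^ 2 + (q + t) ^ 2) ≤ Real.sqrt (p + q ^ 2) + Real.sqrt (n ^ 2 + t ^ 2) := by
  have h1 : 0 ≤ Real.sqrt (p + q ^ 2) := Real.sqrt_nonneg _
  have h2 : 0 ≤ Real.sqrt (n ^ 2 + t ^ 2) := Real.sqrt_nonneg _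
  rw [show p + n ^ 2 + (q + t) ^ 2 = (p + q ^2) + (n ^ 2 + t ^ 2) + 2 * (q * t) by ring]
  have e1 : Real.sqrt (p + q^2) ^ 2 = p + q ^ 2 := Real.sq_sqrt (by positivity)
  have e2 : Real.sqrt (n^2 + t^2) ^ 2 = n ^ 2 + t ^ 2 := Real.sq_sqrt (by positivity)
  have hqt : q * t ≤ Real.sqrt (p + q^2) * Real.sqrt (n^2 + t^2) := by
    have : q * t ≤ Real.sqrt (q^2) * Real.sqrt (t^2) := by
      rw [Real.sqrt_sq hq, Real.sqrt_sq ht]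
    refine this.trans (mul_le_mul ?_ ?_ (Real.sqrt_nonneg _) h1) <;>
      exact Real.sqrt_le_sqrt (by nlinarith)
  have : p + q^2 + (n^2 + t^2) + 2*(q*t) ≤ (Real.sqrt (p+q^2) + Real.sqrt (n^2+t^2))^2 := by
    nlinarith
  calc Real.sqrt (p + q^2 + (n^2+t^2) + 2*(q*t))
      ≤ Real.sqrt ((Real.sqrt (p+q^2) + Real.sqrt (n^2+t^2))^2) := Real.sqrt_le_sqrt this
    _ = _ := Real.sqrt_sq (by positivity)

lemma quad_form_bound (s₁ s₂ A B : ℝ) (hs₁ : 0 ≤ s₁) (hs₂ : 0 ≤ s₂) :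
    B ^ 2 + (Real.sqrt s₁ * A + Real.sqrt s₂ * B) ^ 2 ≤
      ((1 / 2) * (1 + (s₁ + s₂) + Real.sqrt ((1 + (s₁ + s₂)) ^ 2 - 4 * s₁))) * (A ^ 2 + B ^ 2) := by
  set e := Real.sqrt ((1 + (s₁ + s₂)) ^ 2 - 4 * s₁) with he
  have hD : (0:ℝ) ≤ (1 + (s₁ + s₂)) ^ 2 - 4 * s₁ := by nlinarith [sq_nonneg (1 - s₁ + s₂)]
  have he2 : e ^ 2 = (1 + (s₁ + s₂)) ^ 2 - 4 * s₁ := Real.sq_sqrt hD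
  have heg : (1 + s₂ - s₁) ≤ e := by
    rw [he]
    rcases le_or_gt (1 + s₂ - s₁) 0 with h | h
    · exact h.trans (Real.sqrt_nonneg _)
    · rw [show (1 + (s₁ + s₂))^2 - 4*s₁ = (1 + s₂ - s₁)^2 + 4*s₁*s₂ by ring]
      calc 1 + s₂ - s₁ = Real.sqrt ((1 + s₂ - s₁)^2) := (Real.sqrt_sq h.le).symm
        _ ≤ _ := Real.sqrt_le_sqrt (by nlinarith)
  have heg' : (s₁ - 1 - s₂) ≤ e := by
    nlinarith [Real.sqrt_nonneg ((1 + (s₁ + s₂)) ^ 2 - 4 * s₁), sq_nonneg (s₁ - 1 - s₂)]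
  have hA1 : 0 ≤ (1 + s₂ - s₁ + e) / 2 := by linarith
  have hB1 : 0 ≤ (s₁ - 1 - s₂ + e) / 2 := by linarith
  have hprod : ((1 + s₂ - s₁ + e) / 2) * ((s₁ - 1 - s₂ + e) / 2) = s₁ * s₂ := by nlinarith [he2]
  have hs : Real.sqrt s₁ * Real.sqrt s₂ =
      Real.sqrt ((1 + s₂ - s₁ + e) / 2) * Real.sqrt ((s₁ - 1 - s₂ + e) / 2) := by
    rw [← Real.sqrt_mul hs₁, ← Real.sqrt_mul hA1, hprod]
  have e1 : Real.sqrt ((1 + s₂ - s₁ + e) / 2) ^ 2 = (1 + s₂ - s₁ + e) / 2 := Real.sq_sqrt hA1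
  have e2 : Real.sqrt ((s₁ - 1 - s₂ + e) / 2) ^ 2 = (s₁ - 1 - s₂ + e) / 2 := Real.sq_sqrt hB1
  have hexp : (Real.sqrt ((1 + s₂ - s₁ + e) / 2) * A - Real.sqrt ((s₁ - 1 - s₂ + e) / 2) * B) ^ 2
      = ((1 + s₂ - s₁ + e)/2) * A^2
        - 2 * (Real.sqrt ((1 + s₂ - s₁ + e) / 2) * Real.sqrt ((s₁ - 1 - s₂ + e) / 2)) * A * B
        + ((s₁ - 1 - s₂ + e)/2) * B^2 := by
    rw [sub_sq]; rw [mul_pow, mul_pow, e1, e2]; ring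
  have key : 0 ≤ ((1 + s₂ - s₁ + e)/2) * A^2 - 2 * (Real.sqrt s₁ * Real.sqrt s₂) * A * B
      + ((s₁ - 1 - s₂ + e)/2) * B^2 := by
    rw [hs, ← hexp]; positivity
  have es1 : Real.sqrt s₁ ^ 2 = s₁ := Real.sq_sqrt hs₁
  have es2 : Real.sqrt s₂ ^ 2 = s₂ := Real.sq_sqrt hs₂
  nlinarith [key, es1, es2]

lemma final_combine (lam N n xi1 xi2 c d : ℝ) (hN : 1 ≤ N) (hn : 0 ≤ n)
    (hxi2 : 0 ≤ xi2) (hc : 0 ≤ c) (hd : 0 ≤ d)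
    (h1 : lam * N ≤ xi1 * N + c * n) (h2 : lam * n ≤ xi2 * N + d * n) :
    lam ≤ (xi1 + d + Real.sqrt ((xi1 - d) ^ 2 + 4 * xi2 * c)) / 2 := by
  set f := Real.sqrt ((xi1 - d) ^ 2 + 4 * xi2 * c) with hf
  have hf2 : f ^ 2 = (xi1 - d) ^ 2 + 4 * xi2 * c := Real.sq_sqrt (by positivity)
  have hfg : |xi1 - d| ≤ f := by
    rw [hf, ← Real.sqrt_sq_eq_abs]
    exact Real.sqrt_le_sqrt (by nlinarith)
  have hfa := abs_le.mp hfg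
  by_contra hcon
  push_neg at hcon
  have hl1 : xi1 < lam := by linarith [hfa.2]
  have hl2 : d < lam := by linarith [hfa.1]
  have hN0 : 0 < N := by linarith
  rcases eq_or_lt_of_le hn with hn0 | hn0
  · rw [← hn0] at h1
    nlinarith
  · have g1 : (lam - xi1) * N ≤ c * n := by nlinarith
    have g2 : (lam - d) * n ≤ xi2 * N := by nlinarith
    have hmul : (lam - xi1) * (lam - d) * (N * n) ≤ (c * xi2) * (N * n) := by
      have := mul_le_mul g1 g2 (mul_nonneg (by linarith : (0:ℝ) ≤ lam - d) hn)
        (mul_nonneg hc hn)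
      nlinarith [this]
    have hNn : 0 < N * n := by positivity
    have hle : (lam - xi1) * (lam - d) ≤ c * xi2 := le_of_mul_le_mul_right hmul hNn
    have p1 : (d - xi1 + f)/2 ≤ lam - xi1 := by linarith
    have p2 : (xi1 - d + f)/2 < lam - d := by linarith
    have q2 : 0 ≤ (xi1 - d + f)/2 := by linarith [hfa.1]
    have hlt : ((d - xi1 + f)/2) * ((xi1 - d + f)/2) < (lam - xi1) * (lam - d) :=
      mul_lt_mul' p1 p2 q2 (by linarith)
    have hval : ((d - xi1 + f)/2) * ((xi1 - d + f)/2) = xi2 * c := by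
      linear_combination hf2 / 4
    rw [hval] at hlt
    nlinarith

lemma split2 {M : Type*} [AddCommMonoid M] (m : ℕ) (f : ℕ → M) :
    ∑ i ∈ Finset.range (m + 2), f i = ((∑ i ∈ Finset.range m, f (i + 2)) + f 1) + f 0 := by
  rw [Finset.sum_range_succ' f (m + 1), Finset.sum_range_succ' (fun i => f (i + 1)) m]

lemma split2' {M : Type*} [AddCommMonoid M] (m : ℕ) (f : ℕ → M) :
    ∑ i ∈ Finset.range (m + 2), f i = ((∑ i ∈ Finset.range m, f i) + f m) + f (m + 1) := by
  rw [Finset.sum_range_succ, Finset.sum_range_succ]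

lemma bsum_eq (m : ℕ) (a : ℕ → ℍ[ℝ]) (z : ℍ[ℝ]) (hz : IsPolyZero (m + 3) a z) :
    z ^ (m + 4) = ∑ j ∈ Finset.range (m + 3), bseq (m + 3) a j * z ^ j := by
  have e1 : m + 3 - 1 = m + 2 := by omega
  unfold IsPolyZero at hz
  have hzk : (∑ j ∈ Finset.range (m + 3), a j * z ^ j) = -z ^ (m + 3) :=
    eq_neg_of_add_eq_zero_left hz
  have key : ∑ j ∈ Finset.range (m + 3), a j * z ^ (j + 1) = - z ^ (m + 4) := by
    have h1 : ∑ j ∈ Finset.range (m + 3), a j * z ^ (j + 1)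
        = (∑ j ∈ Finset.range (m + 3), a j * z ^ j) * z := by
      rw [Finset.sum_mul]
      exact Finset.sum_congr rfl fun j _ => by rw [mul_assoc, ← pow_succ]
    rw [h1, hzk, neg_mul, ← pow_succ]
  have hb : ∀ j, bseq (m + 3) a j * z ^ j
      = a (m + 2) * (a j * z ^ j) - (if j = 0 then 0 else a (j - 1)) * z ^ j := by
    intro j; unfold bseq; rw [e1, sub_mul, mul_assoc]
  have hsum1 : ∑ j ∈ Finset.range (m + 3), bseq (m + 3) a j * z ^ j
      = a (m + 2) * (∑ j ∈ Finset.range (m + 3), a j * z ^ j)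
        - ∑ j ∈ Finset.range (m + 3), (if j = 0 then 0 else a (j - 1)) * z ^ j := by
    rw [Finset.mul_sum, ← Finset.sum_sub_distrib]
    exact Finset.sum_congr rfl fun j _ => hb j
  have hsum2 : ∑ j ∈ Finset.range (m + 3), (if j = 0 then (0:ℍ[ℝ]) else a (j - 1)) * z ^ j
      = ∑ i ∈ Finset.range (m + 2), a i * z ^ (i + 1) := by
    rw [Finset.sum_range_succ']
    simp
  have hsum3 : ∑ i ∈ Finset.range (m + 2), a i * z ^ (i + 1)
      = (∑ j ∈ Finset.range (m + 3), a j * z ^ (j + 1)) - a (m + 2) * z ^ (m + 3) := by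
    rw [Finset.sum_range_succ (fun j => a j * z ^ (j + 1)) (m + 2)]
    exact (add_sub_cancel_right _ _).symm
  rw [hsum1, hsum2, hsum3, key, hzk]
  noncomm_ring

set_option maxHeartbeats 2000000 in
theorem zero_bound_one (k : ℕ) (hk : 4 ≤ k) (a : ℕ → ℍ[ℝ]) (z : ℍ[ℝ])
    (hz : IsPolyZero k a z) :
    ‖z‖ ≤ Real.sqrt ((1 / 2) *
      ((Real.sqrt ((1 / 2) * (1 + (∑ i ∈ Finset.range (k - 1), ‖a i‖ ^ 2) +
          Real.sqrt ((1 + (∑ i ∈ Finset.range (k - 1), ‖a i‖ ^ 2)) ^ 2 -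
            4 * (‖a 0‖ ^ 2 + ‖a 1‖ ^ 2))))) +
        ‖bseq k a (k - 1)‖ +
        Real.sqrt (((Real.sqrt ((1 / 2) * (1 + (∑ i ∈ Finset.range (k - 1), ‖a i‖ ^ 2) +
            Real.sqrt ((1 + (∑ i ∈ Finset.range (k - 1), ‖a i‖ ^ 2)) ^ 2 -
              4 * (‖a 0‖ ^ 2 + ‖a 1‖ ^ 2))))) - ‖bseq k a (k - 1)‖) ^ 2 +
          4 * (Real.sqrt (∑ i ∈ Finset.range (k - 1), ‖bseq k a i‖ ^ 2)) *
            Real.sqrt (1 + ‖a (k - 1)‖ ^ 2)))) := by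
  obtain ⟨m, rfl⟩ : ∃ m, k = m + 3 := ⟨k - 3, by omega⟩
  simp only [show m + 3 - 1 = m + 2 from by omega]
  -- notation (opaque local abbreviations)
  obtain ⟨S, hS⟩ : ∃ x, x = ∑ i ∈ Finset.range (m + 2), ‖a i‖ ^ 2 := ⟨_, rfl⟩
  rw [← hS]
  obtain ⟨n, hn⟩ : ∃ x, x = ‖z ^ (m + 2)‖ := ⟨_, rfl⟩
  obtain ⟨T, hT⟩ : ∃ x, x = ∑ i ∈ Finset.range (m + 2), ‖z ^ i‖ ^ 2 := ⟨_, rfl⟩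
  obtain ⟨N, hN⟩ : ∃ x, x = Real.sqrt T := ⟨_, rfl⟩
  obtain ⟨P, hP⟩ : ∃ x, x = ∑ i ∈ Finset.range m, ‖z ^ (i + 2)‖ ^ 2 := ⟨_, rfl⟩
  obtain ⟨Q, hQdef⟩ : ∃ x, x = ‖∑ j ∈ Finset.range (m + 2), a j * z ^ j‖ := ⟨_, rfl⟩
  obtain ⟨s₂, hs₂⟩ : ∃ x, x = ∑ j ∈ Finset.range m, ‖a (j + 2)‖ ^ 2 := ⟨_, rfl⟩
  obtain ⟨xi1, hxi1⟩ : ∃ x, x = Real.sqrt ((1 / 2) * (1 + S +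
      Real.sqrt ((1 + S) ^ 2 - 4 * (‖a 0‖ ^ 2 + ‖a 1‖ ^ 2)))) := ⟨_, rfl⟩
  rw [← hxi1]
  obtain ⟨xi2, hxi2⟩ : ∃ x, x = Real.sqrt (∑ i ∈ Finset.range (m + 2), ‖bseq (m + 3) a i‖ ^ 2) :=
    ⟨_, rfl⟩
  rw [← hxi2]
  obtain ⟨c, hc⟩ : ∃ x, x = Real.sqrt (1 + ‖a (m + 2)‖ ^ 2) := ⟨_, rfl⟩
  rw [← hc]
  obtain ⟨d, hd⟩ : ∃ x, x = ‖bseq (m + 3) a (m + 2)‖ := ⟨_, rfl⟩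
  rw [← hd]
  have hP0 : (0:ℝ) ≤ P := hP ▸ Finset.sum_nonneg fun i _ => sq_nonneg _
  have hS0 : (0:ℝ) ≤ S := hS ▸ Finset.sum_nonneg fun i _ => sq_nonneg _
  have hn0 : (0:ℝ) ≤ n := hn ▸ norm_nonneg _
  have hQ0 : (0:ℝ) ≤ Q := hQdef ▸ norm_nonneg _
  have hxi10 : (0:ℝ) ≤ xi1 := hxi1 ▸ Real.sqrt_nonneg _
  have hT1 : T = 1 + ‖z‖ ^ 2 + P := by
    rw [hT, split2 m (fun i => ‖z ^ i‖ ^ 2), ← hP]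
    rw [pow_one, pow_zero, norm_one, one_pow]
    ring
  have hzk : (∑ j ∈ Finset.range (m + 3), a j * z ^ j) = -z ^ (m + 3) :=
    eq_neg_of_add_eq_zero_left hz
  have hzsplit : ‖z ^ (m + 3)‖ ≤ Q + ‖a (m + 2)‖ * n := by
    have h1 : z ^ (m + 3) =
        -((∑ j ∈ Finset.range (m + 2), a j * z ^ j) + a (m + 2) * z ^ (m + 2)) := by
      rw [← Finset.sum_range_succ (fun j => a j * z ^ j) (m + 2), hzk, neg_neg]
    rw [h1, norm_neg]
    refine (norm_add_le _ _).trans ?_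
    rw [norm_mul, ← hQdef, ← hn]
  have hEqA : ‖z‖ ^ 4 * T = P + n ^ 2 + ‖z ^ (m + 3)‖ ^ 2 := by
    have h1 : ∀ i : ℕ, ‖z ^ (i + 2)‖ ^ 2 = ‖z ^ i‖ ^ 2 * ‖z‖ ^ 4 := by
      intro i
      simp only [pow_add, norm_mul, norm_pow]
      ring
    have h2 : ∑ i ∈ Finset.range (m + 2), ‖z ^ (i + 2)‖ ^ 2 = T * ‖z‖ ^ 4 := by
      rw [hT, Finset.sum_mul]
      exact Finset.sum_congr rfl fun i _ => h1 i
    have h3 : ∑ i ∈ Finset.range (m + 2), ‖z ^ (i + 2)‖ ^ 2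
        = P + n ^ 2 + ‖z ^ (m + 3)‖ ^ 2 := by
      rw [split2' m (fun i => ‖z ^ (i + 2)‖ ^ 2), ← hP, ← hn]
    rw [← h3, h2, mul_comm]
  have hsplitQ : (∑ j ∈ Finset.range (m + 2), a j * z ^ j)
      = ((∑ j ∈ Finset.range m, a (j + 2) * z ^ (j + 2)) + a 1 * z ^ 1) + a 0 * z ^ 0 :=
    split2 m (fun j => a j * z ^ j)
  have htail : ‖∑ j ∈ Finset.range m, a (j + 2) * z ^ (j + 2)‖
      ≤ Real.sqrt s₂ * Real.sqrt P := by
    have h := cs_norm_sum (Finset.range m) (fun j => a (j + 2)) (fun j => z ^ (j + 2))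
    rw [← hs₂, ← hP] at h
    exact h
  have hhead : ‖a 1 * z ^ 1 + a 0 * z ^ 0‖
      ≤ Real.sqrt (‖a 0‖ ^ 2 + ‖a 1‖ ^ 2) * Real.sqrt (1 + ‖z‖ ^ 2) := by
    refine (norm_add_le _ _).trans ?_
    rw [norm_mul, norm_mul, pow_one, pow_zero, norm_one, mul_one]
    have hcs : (‖a 1‖ * ‖z‖ + ‖a 0‖) ^ 2 ≤ (‖a 0‖ ^ 2 + ‖a 1‖ ^ 2) * (1 + ‖z‖ ^ 2) := by
      nlinarith [sq_nonneg (‖a 0‖ * ‖z‖ - ‖a 1‖), norm_nonneg (a 0), norm_nonneg (a 1),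
        norm_nonneg z]
    calc ‖a 1‖ * ‖z‖ + ‖a 0‖ = Real.sqrt ((‖a 1‖ * ‖z‖ + ‖a 0‖) ^ 2) :=
          (Real.sqrt_sq (add_nonneg (mul_nonneg (norm_nonneg _) (norm_nonneg _)) (norm_nonneg _))).symm
      _ ≤ Real.sqrt ((‖a 0‖ ^ 2 + ‖a 1‖ ^ 2) * (1 + ‖z‖ ^ 2)) := Real.sqrt_le_sqrt hcs
      _ = _ := Real.sqrt_mul (add_nonneg (sq_nonneg _) (sq_nonneg _)) _
  have hQ : Q ≤ Real.sqrt (‖a 0‖ ^ 2 + ‖a 1‖ ^ 2) * Real.sqrt (1 + ‖z‖ ^ 2)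
      + Real.sqrt s₂ * Real.sqrt P := by
    rw [hQdef, hsplitQ, add_assoc]
    refine (norm_add_le _ _).trans ?_
    rw [add_comm (Real.sqrt (‖a 0‖ ^ 2 + ‖a 1‖ ^ 2) * Real.sqrt (1 + ‖z‖ ^ 2))]
    exact add_le_add htail hhead
  have hSsum : S = (‖a 0‖ ^ 2 + ‖a 1‖ ^ 2) + s₂ := by
    rw [hS, split2 m (fun i => ‖a i‖ ^ 2), ← hs₂]
    ring
  have hxi1sq : xi1 ^ 2 = (1 / 2) * (1 + S +
      Real.sqrt ((1 + S) ^ 2 - 4 * (‖a 0‖ ^ 2 + ‖a 1‖ ^ 2))) := by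
    rw [hxi1]
    refine Real.sq_sqrt ?_
    have h := Real.sqrt_nonneg ((1 + S) ^ 2 - 4 * (‖a 0‖ ^ 2 + ‖a 1‖ ^ 2))
    linarith [hS0]
  have hPQ : P + Q ^ 2 ≤ xi1 ^ 2 * T := by
    have hq2 := quad_form_bound (‖a 0‖ ^ 2 + ‖a 1‖ ^ 2) s₂
      (Real.sqrt (1 + ‖z‖ ^ 2)) (Real.sqrt P) (add_nonneg (sq_nonneg _) (sq_nonneg _))
      (hs₂ ▸ Finset.sum_nonneg fun i _ => sq_nonneg _)
    rw [Real.sq_sqrt (add_nonneg zero_le_one (sq_nonneg ‖z‖)), Real.sq_sqrt hP0,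
      ← hSsum, ← hT1, ← hxi1sq] at hq2
    have hQ2 : Q ^ 2 ≤ (Real.sqrt (‖a 0‖ ^ 2 + ‖a 1‖ ^ 2) * Real.sqrt (1 + ‖z‖ ^ 2)
        + Real.sqrt s₂ * Real.sqrt P) ^ 2 := by
      exact pow_le_pow_left₀ hQ0 hQ 2
    linarith [hq2, hQ2]
  have hI1 : ‖z‖ ^ 2 * N ≤ xi1 * N + c * n := by
    have hT0 : (0:ℝ) ≤ T := hT ▸ Finset.sum_nonneg fun i _ => sq_nonneg _
    have h0 : ‖z‖ ^ 2 * N = Real.sqrt (‖z‖ ^ 4 * T) := by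
      rw [Real.sqrt_mul (pow_nonneg (norm_nonneg z) 4), hN,
        show ‖z‖ ^ 4 = (‖z‖ ^ 2) ^ 2 from by ring, Real.sqrt_sq (sq_nonneg ‖z‖)]
    have hz2 : ‖z ^ (m + 3)‖ ^ 2 ≤ (Q + ‖a (m + 2)‖ * n) ^ 2 := by
      exact pow_le_pow_left₀ (norm_nonneg _) hzsplit 2
    calc ‖z‖ ^ 2 * N = Real.sqrt (‖z‖ ^ 4 * T) := h0
      _ = Real.sqrt (P + n ^ 2 + ‖z ^ (m + 3)‖ ^ 2) := by rw [hEqA]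
      _ ≤ Real.sqrt (P + n ^ 2 + (Q + ‖a (m + 2)‖ * n) ^ 2) :=
          Real.sqrt_le_sqrt (by linarith)
      _ ≤ Real.sqrt (P + Q ^ 2) + Real.sqrt (n ^ 2 + (‖a (m + 2)‖ * n) ^ 2) :=
          tri3 P n Q (‖a (m + 2)‖ * n) hP0 hQ0 (mul_nonneg (norm_nonneg _) hn0)
      _ ≤ xi1 * N + c * n := by
          refine add_le_add ?_ (le_of_eq ?_)
          · calc Real.sqrt (P + Q ^ 2) ≤ Real.sqrt (xi1 ^ 2 * T) := Real.sqrt_le_sqrt hPQ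
              _ = xi1 * N := by
                  rw [Real.sqrt_mul (sq_nonneg xi1), Real.sqrt_sq hxi10, hN]
          · rw [show n ^ 2 + (‖a (m + 2)‖ * n) ^ 2 = (1 + ‖a (m + 2)‖ ^ 2) * n ^ 2 from by ring,
              Real.sqrt_mul (add_nonneg zero_le_one (sq_nonneg _)), Real.sqrt_sq hn0, ← hc]
  have hI2 : ‖z‖ ^ 2 * n ≤ xi2 * N + d * n := by
    have h2 : ‖z‖ ^ 2 * n = ‖z ^ (m + 4)‖ := by
      rw [show m + 4 = (m + 2) + 2 from by omega, pow_add, norm_mul, ← hn, norm_pow]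
      ring
    rw [h2, bsum_eq m a z hz,
      Finset.sum_range_succ (fun j => bseq (m + 3) a j * z ^ j) (m + 2)]
    refine (norm_add_le _ _).trans ?_
    have hcs := cs_norm_sum (Finset.range (m + 2)) (fun j => bseq (m + 3) a j)
      (fun j => z ^ j)
    rw [← hxi2, ← hT, ← hN] at hcs
    refine add_le_add hcs (le_of_eq ?_)
    rw [norm_mul, ← hd, ← hn]
  have hN1 : 1 ≤ N := by
    have h1 : (1:ℝ) ≤ T := by rw [hT1]; nlinarith [hP0, sq_nonneg ‖z‖]
    calc (1:ℝ) = Real.sqrt 1 := Real.sqrt_one.symm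
      _ ≤ Real.sqrt T := Real.sqrt_le_sqrt h1
      _ = N := hN.symm
  have hmain := final_combine (‖z‖ ^ 2) N n xi1 xi2 c d hN1 hn0
    (hxi2 ▸ Real.sqrt_nonneg _) (hc ▸ Real.sqrt_nonneg _) (hd ▸ norm_nonneg _) hI1 hI2
  have hrhs0 : (0:ℝ) ≤ (1 / 2) * (xi1 + d +
      Real.sqrt ((xi1 - d) ^ 2 + 4 * xi2 * c)) := by
    have : (0:ℝ) ≤ d := hd ▸ norm_nonneg _
    have := Real.sqrt_nonneg ((xi1 - d) ^ 2 + 4 * xi2 * c)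
    nlinarith [hxi10]
  rw [Real.le_sqrt (norm_nonneg z) hrhs0]
  linarith [hmain]
end
end

section
/- Every right eigenvalue ξ of the monic quaternionic matrix polynomial L satisfies |ξ| ≤ ( 1 + (1/2)[ β₁² + β₂² + √((β₁² + β₂²)² + 4(2β₁β₂ + 1)) ] )^{1/4}, where β₁² = (1/2)[ Σ_{i=0}^{k−3}(‖Aᵢ‖₂² + ‖Bᵢ‖₂²) + √((Σ_{i=0}^{k−3}(‖Aᵢ‖₂² − ‖Bᵢ‖₂²))² + 4‖Σ_{i=0}^{k−3} AᵢBᵢᴴ‖₂²) ] and β₂² = (1/2)[ Σ_{i=k−2}^{k−1}(‖Aᵢ‖₂² + ‖Bᵢ‖₂²) + √((Σ_{i=k−2}^{k−1}(‖Aᵢ‖₂² − ‖Bᵢ‖₂²))² + 4‖Σ_{i=k−2}^{k−1} AᵢBᵢᴴ‖₂²) ], with Bᵢ = A_{k−1}Aᵢ − A_{i−1}, A_{−1} = 0. -/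
open scoped Matrix Quaternion BigOperators

noncomputable section

/-- Block companion matrix of the monic quaternionic matrix polynomial with
coefficients `A 0, …, A (k-1)`. -/
def companion (k n : ℕ) (A : ℕ → Matrix (Fin n) (Fin n) ℍ[ℝ]) :
    Matrix (Fin k × Fin n) (Fin k × Fin n) ℍ[ℝ] :=
  fun p q =>
    if (p.1 : ℕ) + 1 = (q.1 : ℕ) then (if p.2 = q.2 then 1 else 0)
    else if (p.1 : ℕ) = k - 1 then -(A (q.1 : ℕ)) p.2 q.2 else 0

/-- The coefficients `Bᵢ = A_{k-1} Aᵢ - A_{i-1}` (with `A_{-1} = 0`). -/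
def Bseq (k n : ℕ) (A : ℕ → Matrix (Fin n) (Fin n) ℍ[ℝ]) (i : ℕ) :
    Matrix (Fin n) (Fin n) ℍ[ℝ] :=
  A (k - 1) * A i - (if i = 0 then 0 else A (i - 1))

/-- The coefficients `Cᵢ = -A_{k-1} Bᵢ + A_{k-2} Aᵢ - A_{i-2}` (with `A_{-1} = A_{-2} = 0`). -/
def Cseq (k n : ℕ) (A : ℕ → Matrix (Fin n) (Fin n) ℍ[ℝ]) (i : ℕ) :
    Matrix (Fin n) (Fin n) ℍ[ℝ] :=
  -(A (k - 1) * Bseq k n A i) + A (k - 2) * A i - (if i ≤ 1 then 0 else A (i - 2))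

/-- `lam` is a right eigenvalue of the monic matrix polynomial
`L(ξ) = Iξᵏ + A_{k-1}ξ^{k-1} + ⋯ + A₀`. -/
def PolyRightEig (k n : ℕ) (A : ℕ → Matrix (Fin n) (Fin n) ℍ[ℝ]) (lam : ℍ[ℝ]) : Prop :=
  ∃ x : Fin n → ℍ[ℝ], x ≠ 0 ∧
    ∀ j, (∑ i ∈ Finset.range k, ((A i).mulVec x j) * lam ^ i) + x j * lam ^ k = 0

/-
Let `x` be an eigenvector, `yᵢ = x λⁱ` and `r = |λ|`, so that `‖yᵢ‖ = ‖x‖ rⁱ`; view `ℍⁿ` as a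
real Hilbert space. The eigen-equation reads `-y_k = ∑_{i<k} Aᵢ yᵢ`; multiplying it by `A_{k-1}`
and subtracting its right shift by `λ` gives `y_{k+1} = ∑_{i<k} Bᵢ yᵢ`. Split both sums at `k - 2`.
On each block the operator `(yᵢ)ᵢ ↦ (∑ Aᵢ yᵢ, ∑ Bᵢ yᵢ)` has squared norm at most the largest
eigenvalue `βⱼ²` of `[[∑ ‖Aᵢ‖², ‖∑ Aᵢ Bᵢᴴ‖], [‖∑ Aᵢ Bᵢᴴ‖, ∑ ‖Bᵢ‖²]]`, so the triangle inequality
for `(y_k, y_{k+1})` gives `r^k √(1 + r²) ≤ β₁ √(∑_{i<k-2} r^{2i}) + β₂ r^{k-2} √(1 + r²)`.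
For `r > 1`, summing the geometric series and putting `s = √(r⁴ - 1)` leaves
`s⁴ ≤ (β₁² + β₂²) s² + 2β₁β₂ + 1`, so `r⁴ - 1` is at most the largest root of
`z² - (β₁² + β₂²) z - (2β₁β₂ + 1)`.
-/

open scoped RealInnerProductSpace InnerProduct
open Finset

theorem le_half_add_sqrt_of_sq_le {P Q w : ℝ} (h : w ^ 2 ≤ P * w + Q) :
    w ≤ (1 / 2) * (P + √(P ^ 2 + 4 * Q)) := by
  have : |2 * w - P| ≤ √(P ^ 2 + 4 * Q) := Real.abs_le_sqrt (by nlinarith)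
  linarith [le_abs_self (2 * w - P)]

theorem pow_four_le_of_mul_le {s t b₁ b₂ : ℝ} (hs : 0 ≤ s) (ht : 0 ≤ t) (hts : t ^ 2 = 1 + s ^ 2)
    (hb₁ : 0 ≤ b₁) (hb₂ : 0 ≤ b₂) (h : t * s ≤ b₁ + b₂ * s) :
    s ^ 4 ≤ (b₁ ^ 2 + b₂ ^ 2) * s ^ 2 + 2 * b₁ * b₂ + 1 := by
  rcases le_or_gt s 1 with hs1 | hs1
  · have : s ^ 4 ≤ 1 := pow_le_one₀ hs hs1
    nlinarith [mul_nonneg hb₁ hb₂, sq_nonneg (b₁ * s), sq_nonneg (b₂ * s)]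
  rcases le_or_gt t b₂ with htb | htb
  · nlinarith [mul_nonneg hb₁ hb₂, sq_nonneg (b₁ * s), mul_le_mul htb htb ht hb₂]
  obtain ⟨u, hu, rfl⟩ : ∃ u, 0 < u ∧ b₂ = t - u := ⟨t - b₂, by linarith, by ring⟩
  have hus : u * s ≤ b₁ := by linarith
  have ha : 0 < s ^ 4 + s ^ 2 - 2 * s := by
    have : 0 < s * (s - 1) * (s ^ 2 + s + 2) := by
      have : 0 < s - 1 := by linarith
      positivity
    linarith
  -- a quadratic `a u² - 2 b u + c` in `u` with `a > 0` and `b² ≤ a c`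
  have hquad : 0 ≤ u ^ 2 * s ^ 4 + (t - u) ^ 2 * s ^ 2 + 2 * (u * s) * (t - u) + 1 - s ^ 4 := by
    have key : (s ^ 4 + s ^ 2 - 2 * s) *
        (u ^ 2 * s ^ 4 + (t - u) ^ 2 * s ^ 2 + 2 * (u * s) * (t - u) + 1 - s ^ 4) =
        ((s ^ 4 + s ^ 2 - 2 * s) * u - t * s * (s - 1)) ^ 2
          + s * (s - 1) * (s ^ 2 + 1) * (2 * s + 2) := by
      linear_combination (s ^ 6 - s ^ 2) * hts
    have : 0 ≤ s * (s - 1) * (s ^ 2 + 1) * (2 * s + 2) := by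
      have : 0 ≤ s - 1 := by linarith
      positivity
    exact nonneg_of_mul_nonneg_right (by nlinarith) ha
  have hb₁sq : (u * s) ^ 2 ≤ b₁ ^ 2 := pow_le_pow_left₀ (by positivity) hus 2
  nlinarith [mul_le_mul_of_nonneg_right hus hb₂, mul_le_mul_of_nonneg_right hb₁sq (sq_nonneg s)]

theorem geom_sum_le_pow_div {t : ℝ} (ht : 1 < t) (m : ℕ) :
    ∑ i ∈ range m, t ^ i ≤ t ^ m / (t - 1) := by
  rw [le_div_iff₀ (by linarith), geom_sum_mul]
  linarith

theorem sq_mul_le_of_geometric_bound (m : ℕ) {N r b₁ b₂ : ℝ} (hN : 0 < N) (hr : 1 < r)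
    (hb₁ : 0 ≤ b₁)
    (h : √((N * r ^ (m + 2)) ^ 2 + (N * r ^ (m + 3)) ^ 2) ≤
      b₁ * √(∑ i ∈ range m, (N * r ^ i) ^ 2) + b₂ * √((N * r ^ m) ^ 2 + (N * r ^ (m + 1)) ^ 2)) :
    r ^ 2 * √(r ^ 4 - 1) ≤ b₁ + b₂ * √(r ^ 4 - 1) := by
  have ha : 0 < N * r ^ m := by positivity
  set d := √(r ^ 2 - 1)
  set e := √(1 + r ^ 2)
  have hd : 0 < d := Real.sqrt_pos.mpr (by nlinarith)
  have hd2 : d ^ 2 = r ^ 2 - 1 := Real.sq_sqrt (by nlinarith)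
  have hde : √(r ^ 4 - 1) = d * e := by
    rw [← Real.sqrt_mul (by nlinarith)]; ring_nf
  have hlhs : √((N * r ^ (m + 2)) ^ 2 + (N * r ^ (m + 3)) ^ 2) = N * r ^ m * r ^ 2 * e := by
    rw [show (N * r ^ (m + 2)) ^ 2 + (N * r ^ (m + 3)) ^ 2 = (N * r ^ m * r ^ 2) ^ 2 * (1 + r ^ 2)
      by ring, Real.sqrt_mul (sq_nonneg _), Real.sqrt_sq (by positivity)]
  have htail : √((N * r ^ m) ^ 2 + (N * r ^ (m + 1)) ^ 2) = N * r ^ m * e := by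
    rw [show (N * r ^ m) ^ 2 + (N * r ^ (m + 1)) ^ 2 = (N * r ^ m) ^ 2 * (1 + r ^ 2) by ring,
      Real.sqrt_mul (sq_nonneg _), Real.sqrt_sq ha.le]
  have hhead : √(∑ i ∈ range m, (N * r ^ i) ^ 2) ≤ N * r ^ m / d := by
    rw [← Real.sqrt_sq (by positivity : 0 ≤ N * r ^ m / d)]
    apply Real.sqrt_le_sqrt
    calc ∑ i ∈ range m, (N * r ^ i) ^ 2 = N ^ 2 * ∑ i ∈ range m, (r ^ 2) ^ i := by
          rw [mul_sum]; exact sum_congr rfl fun i _ => by ring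
      _ ≤ N ^ 2 * ((r ^ 2) ^ m / (r ^ 2 - 1)) := by
          gcongr; exact geom_sum_le_pow_div (by nlinarith) m
      _ = (N * r ^ m / d) ^ 2 := by rw [div_pow, hd2]; ring
  have h' : N * r ^ m * r ^ 2 * e ≤ b₁ * (N * r ^ m / d) + b₂ * (N * r ^ m * e) := by
    rw [← hlhs, ← htail]
    exact h.trans (add_le_add_left (mul_le_mul_of_nonneg_left hhead hb₁) _)
  rw [hde]
  refine le_of_mul_le_mul_left ?_ ha
  calc N * r ^ m * (r ^ 2 * (d * e)) = d * (N * r ^ m * r ^ 2 * e) := by ring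
    _ ≤ d * (b₁ * (N * r ^ m / d) + b₂ * (N * r ^ m * e)) := by gcongr
    _ = N * r ^ m * (b₁ + b₂ * (d * e)) := by field_simp

theorem le_rpow_quarter_of_geometric_bound (m : ℕ) {N r b₁ b₂ : ℝ} (hN : 0 < N) (hr : 0 ≤ r)
    (hb₁ : 0 ≤ b₁) (hb₂ : 0 ≤ b₂)
    (h : √((N * r ^ (m + 2)) ^ 2 + (N * r ^ (m + 3)) ^ 2) ≤
      b₁ * √(∑ i ∈ range m, (N * r ^ i) ^ 2) + b₂ * √((N * r ^ m) ^ 2 + (N * r ^ (m + 1)) ^ 2)) :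
    r ≤ (1 + (1 / 2) * ((b₁ ^ 2 + b₂ ^ 2) + √((b₁ ^ 2 + b₂ ^ 2) ^ 2 + 4 * (2 * b₁ * b₂ + 1))))
      ^ ((1 : ℝ) / 4) := by
  suffices h4 : r ^ 4 ≤
      1 + (1 / 2) * ((b₁ ^ 2 + b₂ ^ 2) + √((b₁ ^ 2 + b₂ ^ 2) ^ 2 + 4 * (2 * b₁ * b₂ + 1))) by
    rw [one_div (4 : ℝ), Real.le_rpow_inv_iff_of_pos hr
      ((by positivity : (0 : ℝ) ≤ r ^ 4).trans h4) four_pos]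
    exact_mod_cast h4
  rcases le_or_gt r 1 with hr1 | hr1
  · have : r ^ 4 ≤ 1 := pow_le_one₀ hr hr1
    have : 0 ≤ √((b₁ ^ 2 + b₂ ^ 2) ^ 2 + 4 * (2 * b₁ * b₂ + 1)) := Real.sqrt_nonneg _
    nlinarith [sq_nonneg b₁, sq_nonneg b₂]
  have hs2 : √(r ^ 4 - 1) ^ 2 = r ^ 4 - 1 :=
    Real.sq_sqrt (by nlinarith [one_lt_pow₀ hr1 four_ne_zero])
  have hquartic := pow_four_le_of_mul_le (Real.sqrt_nonneg _) (by positivity)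
    (by rw [hs2]; ring) hb₁ hb₂ (sq_mul_le_of_geometric_bound m hN hr1 hb₁ h)
  have := le_half_add_sqrt_of_sq_le (P := b₁ ^ 2 + b₂ ^ 2) (Q := 2 * b₁ * b₂ + 1)
    (w := √(r ^ 4 - 1) ^ 2) (by linear_combination hquartic)
  rw [hs2] at this
  linarith

/-- The largest eigenvalue of the real symmetric matrix `!![p, c; c, q]`. -/
def maxEigSym2 (p q c : ℝ) : ℝ := (1 / 2) * ((p + q) + √((p - q) ^ 2 + 4 * c ^ 2))

theorem quadForm_le_maxEigSym2 (p q c a b : ℝ) :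
    p * a ^ 2 + 2 * c * (a * b) + q * b ^ 2 ≤ maxEigSym2 p q c * (a ^ 2 + b ^ 2) := by
  unfold maxEigSym2
  set D := √((p - q) ^ 2 + 4 * c ^ 2)
  have hD : D ^ 2 = (p - q) ^ 2 + 4 * c ^ 2 := Real.sq_sqrt (by positivity)
  have hDpq : |p - q| ≤ D := Real.abs_le_sqrt (by nlinarith)
  -- with `X = 2 (μ - p)` and `Y = 2 (μ - q)` we have `X, Y ≥ 0` and `X Y = 4 c²`
  have hX : 0 ≤ q - p + D := by linarith [le_abs_self (p - q)]
  have hY : 0 ≤ p - q + D := by linarith [neg_abs_le (p - q)]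
  have hXY : (q - p + D) * (p - q + D) = 4 * c ^ 2 := by nlinarith
  rcases hX.eq_or_lt with hX0 | hX0
  · have hc : c = 0 := by nlinarith
    subst hc
    nlinarith [mul_nonneg hY (sq_nonneg b)]
  · have : 0 ≤ (q - p + D) * ((q - p + D) * a ^ 2 - 4 * c * (a * b) + (p - q + D) * b ^ 2) := by
      nlinarith [sq_nonneg ((q - p + D) * a - 2 * c * b)]
    nlinarith [nonneg_of_mul_nonneg_right this hX0]

theorem le_maxEigSym2_left (p q c : ℝ) : p ≤ maxEigSym2 p q c := by
  simpa using quadForm_le_maxEigSym2 p q c 1 0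

theorem sqrt_norm_sq_add_norm_sq_add_le {F : Type*} [SeminormedAddCommGroup F] (u₁ u₂ v₁ v₂ : F) :
    √(‖u₁ + u₂‖ ^ 2 + ‖v₁ + v₂‖ ^ 2) ≤ √(‖u₁‖ ^ 2 + ‖v₁‖ ^ 2) + √(‖u₂‖ ^ 2 + ‖v₂‖ ^ 2) := by
  simpa [← WithLp.toLp_add, WithLp.prod_norm_eq_of_L2] using
    norm_add_le (WithLp.toLp 2 (u₁, v₁)) (WithLp.toLp 2 (u₂, v₂))

section BlockOperator

variable {ι E F : Type*} [NormedAddCommGroup E] [InnerProductSpace ℝ E] [CompleteSpace E]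
  [NormedAddCommGroup F] [InnerProductSpace ℝ F] [CompleteSpace F]

open ContinuousLinearMap

/- With `u = ∑ Mᵢ yᵢ`, `v = ∑ Nᵢ yᵢ` and `gᵢ = Mᵢ† u + Nᵢ† v` we have `‖u‖² + ‖v‖² = ∑ ⟪yᵢ, gᵢ⟫`,
which Cauchy–Schwarz bounds by `√(∑ ‖yᵢ‖²) √(∑ ‖gᵢ‖²)`, while `∑ ‖gᵢ‖² ≤ μ (‖u‖² + ‖v‖²)`. -/
theorem norm_sq_add_norm_sq_sum_le (s : Finset ι) (M N : ι → E →L[ℝ] F) (y : ι → E) :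
    ‖∑ i ∈ s, M i (y i)‖ ^ 2 + ‖∑ i ∈ s, N i (y i)‖ ^ 2 ≤
      maxEigSym2 (∑ i ∈ s, ‖M i‖ ^ 2) (∑ i ∈ s, ‖N i‖ ^ 2) ‖∑ i ∈ s, M i ∘L (N i)†‖ *
        ∑ i ∈ s, ‖y i‖ ^ 2 := by
  set u := ∑ i ∈ s, M i (y i)
  set v := ∑ i ∈ s, N i (y i)
  set μ := maxEigSym2 (∑ i ∈ s, ‖M i‖ ^ 2) (∑ i ∈ s, ‖N i‖ ^ 2) ‖∑ i ∈ s, M i ∘L (N i)†‖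
  set S := ∑ i ∈ s, ‖y i‖ ^ 2
  set W := ‖u‖ ^ 2 + ‖v‖ ^ 2
  set T := ∑ i ∈ s, ‖adjoint (M i) u + adjoint (N i) v‖ ^ 2
  have hW : W = ∑ i ∈ s, ⟪y i, adjoint (M i) u + adjoint (N i) v⟫ := by
    simp only [W, inner_add_right, sum_add_distrib, adjoint_inner_right, ← sum_inner, u, v,
      real_inner_self_eq_norm_sq]
  have hWT : W ≤ √S * √T := by
    calc W ≤ ∑ i ∈ s, ‖y i‖ * ‖adjoint (M i) u + adjoint (N i) v‖ :=
          hW ▸ sum_le_sum fun i _ => real_inner_le_norm _ _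
      _ ≤ √S * √T := Real.sum_mul_le_sqrt_mul_sqrt _ _ _
  have hcross : ∑ i ∈ s, ⟪adjoint (M i) u, adjoint (N i) v⟫ ≤
      ‖∑ i ∈ s, M i ∘L (N i)†‖ * (‖u‖ * ‖v‖) := by
    calc ∑ i ∈ s, ⟪adjoint (M i) u, adjoint (N i) v⟫ = ⟪u, (∑ i ∈ s, M i ∘L (N i)†) v⟫ := by
          simp only [adjoint_inner_left, _root_.sum_apply, comp_apply, inner_sum]
      _ ≤ ‖u‖ * (‖∑ i ∈ s, M i ∘L (N i)†‖ * ‖v‖) :=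
          (real_inner_le_norm _ _).trans (by gcongr; exact le_opNorm _ _)
      _ = _ := by ring
  have hadj (L : E →L[ℝ] F) (w : F) : ‖adjoint L w‖ ^ 2 ≤ ‖L‖ ^ 2 * ‖w‖ ^ 2 := by
    rw [← mul_pow, ← LinearIsometryEquiv.norm_map adjoint L]
    exact pow_le_pow_left₀ (norm_nonneg _) (le_opNorm _ _) 2
  have hTW : T ≤ μ * W := by
    calc T = ∑ i ∈ s, ‖adjoint (M i) u‖ ^ 2 + 2 * ∑ i ∈ s, ⟪adjoint (M i) u, adjoint (N i) v⟫
          + ∑ i ∈ s, ‖adjoint (N i) v‖ ^ 2 := by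
          simp only [T, norm_add_sq_real, sum_add_distrib, mul_sum]
      _ ≤ (∑ i ∈ s, ‖M i‖ ^ 2) * ‖u‖ ^ 2
          + 2 * ‖∑ i ∈ s, M i ∘L (N i)†‖ * (‖u‖ * ‖v‖) + (∑ i ∈ s, ‖N i‖ ^ 2) * ‖v‖ ^ 2 := by
          rw [sum_mul, sum_mul, mul_assoc 2]
          gcongr with i _ i _
          · exact hadj _ _
          · exact hadj _ _
      _ ≤ μ * W := quadForm_le_maxEigSym2 _ _ _ _ _
  have hμ : 0 ≤ μ := (sum_nonneg fun i _ => sq_nonneg _).trans (le_maxEigSym2_left _ _ _)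
  have hS : 0 ≤ S := sum_nonneg fun i _ => sq_nonneg _
  have hW0 : 0 ≤ W := by positivity
  have hW2 : W * W ≤ μ * S * W := by
    calc W * W = W ^ 2 := (sq W).symm
      _ ≤ (√S * √T) ^ 2 := pow_le_pow_left₀ hW0 hWT 2
      _ = S * T := by
          rw [mul_pow, Real.sq_sqrt hS, Real.sq_sqrt (sum_nonneg fun i _ => sq_nonneg _)]
      _ ≤ S * (μ * W) := by gcongr
      _ = μ * S * W := by ring
  rcases hW0.eq_or_lt with hW0 | hW0
  · rw [← hW0]; positivity
  · exact le_of_mul_le_mul_right hW2 hW0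

theorem sqrt_norm_sq_add_norm_sq_sum_union_le [DecidableEq ι] {s t : Finset ι} (hst : Disjoint s t)
    (M N : ι → E →L[ℝ] F) (y : ι → E) :
    √(‖∑ i ∈ s ∪ t, M i (y i)‖ ^ 2 + ‖∑ i ∈ s ∪ t, N i (y i)‖ ^ 2) ≤
      √(maxEigSym2 (∑ i ∈ s, ‖M i‖ ^ 2) (∑ i ∈ s, ‖N i‖ ^ 2) ‖∑ i ∈ s, M i ∘L (N i)†‖) *
          √(∑ i ∈ s, ‖y i‖ ^ 2) +
        √(maxEigSym2 (∑ i ∈ t, ‖M i‖ ^ 2) (∑ i ∈ t, ‖N i‖ ^ 2) ‖∑ i ∈ t, M i ∘L (N i)†‖) *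
          √(∑ i ∈ t, ‖y i‖ ^ 2) := by
  rw [sum_union hst, sum_union hst, ← Real.sqrt_mul' _ (sum_nonneg fun i _ => sq_nonneg _),
    ← Real.sqrt_mul' _ (sum_nonneg fun i _ => sq_nonneg _)]
  exact (sqrt_norm_sq_add_norm_sq_add_le _ _ _ _).trans <| add_le_add
    (Real.sqrt_le_sqrt (norm_sq_add_norm_sq_sum_le _ _ _ _))
    (Real.sqrt_le_sqrt (norm_sq_add_norm_sq_sum_le _ _ _ _))

end BlockOperator

theorem sum_range_smul_shift {R M : Type*} [Ring R] [AddCommGroup M] [Module R M]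
    (A : ℕ → R) (σ : M →+ M) (hσ : ∀ i z, σ (A i • z) = A i • σ z) (y : ℕ → M)
    (hy : ∀ i, y (i + 1) = σ (y i)) (m : ℕ) (h : ∑ i ∈ range (m + 1), A i • y i = -y (m + 1)) :
    ∑ i ∈ range (m + 1), (A m * A i - if i = 0 then 0 else A (i - 1)) • y i = y (m + 2) := by
  have hlow : ∑ i ∈ range m, A i • y i = -y (m + 1) - A m • y m := by
    rw [← h, sum_range_succ]; abel
  have hshift : ∑ i ∈ range (m + 1), (if i = 0 then 0 else A (i - 1)) • y i =
      -y (m + 2) - A m • y (m + 1) := by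
    simp only [sum_range_succ' _ m, if_pos, zero_smul, add_zero, Nat.add_one_ne_zero, if_false,
      Nat.add_sub_cancel, hy, ← hσ, ← map_sum, hlow, map_sub, map_neg]
  simp only [sub_smul, mul_smul, sum_sub_distrib, ← smul_sum, h, hshift, smul_neg]
  abel

theorem Quaternion.inner_star_mul_left (a b c : ℍ[ℝ]) : ⟪star a * b, c⟫ = ⟪b, a * c⟫ := by
  simp only [Quaternion.inner_def, star_mul, ← mul_assoc]
  simp only [Quaternion.re_mul, Quaternion.re_star, Quaternion.imI_star, Quaternion.imJ_star,
    Quaternion.imK_star, Quaternion.imI_mul, Quaternion.imJ_mul, Quaternion.imK_mul]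
  ring

namespace Matrix

variable {ι : Type*} [Fintype ι] [DecidableEq ι]

def toQuaternionCLM :
    Matrix ι ι ℍ[ℝ] →+* (EuclideanSpace ℍ[ℝ] ι →L[ℝ] EuclideanSpace ℍ[ℝ] ι) where
  toFun A := LinearMap.toContinuousLinearMap <|
    (WithLp.linearEquiv 2 ℝ (ι → ℍ[ℝ])).symm.toLinearMap ∘ₗ mulVecBilin ℝ ℝ A ∘ₗ
      (WithLp.linearEquiv 2 ℝ (ι → ℍ[ℝ])).toLinearMap
  map_one' := by ext v : 1; simp
  map_mul' A B := by ext v : 1; simp [mulVec_mulVec]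
  map_zero' := by ext v : 1; simp
  map_add' A B := by ext v : 1; simp

@[simp]
theorem toQuaternionCLM_apply (A : Matrix ι ι ℍ[ℝ]) (v : EuclideanSpace ℍ[ℝ] ι) :
    toQuaternionCLM A v = WithLp.toLp 2 (A *ᵥ v.ofLp) := rfl

theorem toQuaternionCLM_op_smul (A : Matrix ι ι ℍ[ℝ]) (q : ℍ[ℝ]) (v : EuclideanSpace ℍ[ℝ] ι) :
    toQuaternionCLM A (MulOpposite.op q • v) = MulOpposite.op q • toQuaternionCLM A v := by
  simp [mulVec_smul]

theorem adjoint_toQuaternionCLM (A : Matrix ι ι ℍ[ℝ]) :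
    (toQuaternionCLM A)† = toQuaternionCLM Aᴴ := by
  refine ((ContinuousLinearMap.eq_adjoint_iff _ _).mpr fun x y => ?_).symm
  simp only [PiLp.inner_apply, toQuaternionCLM_apply, mulVec, dotProduct, conjTranspose_apply,
    sum_inner, inner_sum, Quaternion.inner_star_mul_left]
  exact sum_comm

end Matrix

open Matrix

theorem qVecNorm_eq_norm {ι : Type*} [Fintype ι] (x : ι → ℍ[ℝ]) :
    qVecNorm x = ‖WithLp.toLp 2 x‖ := by
  rw [PiLp.norm_eq_of_L2]; rfl

theorem qSpecNorm_eq_norm {ι : Type*} [Fintype ι] [DecidableEq ι] (A : Matrix ι ι ℍ[ℝ]) :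
    qSpecNorm A = ‖toQuaternionCLM A‖ := by
  have hratio (x : ι → ℍ[ℝ]) : qVecNorm (A *ᵥ x) / qVecNorm x =
      ‖toQuaternionCLM A (WithLp.toLp 2 x)‖ / ‖WithLp.toLp 2 x‖ := by
    rw [qVecNorm_eq_norm, qVecNorm_eq_norm]; rfl
  have hbdd : ∀ c ∈ {c : ℝ | ∃ x : ι → ℍ[ℝ], x ≠ 0 ∧ c = qVecNorm (A *ᵥ x) / qVecNorm x},
      c ≤ ‖toQuaternionCLM A‖ := by
    rintro _ ⟨x, -, rfl⟩
    rw [hratio]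
    exact div_le_of_le_mul₀ (norm_nonneg _) (ContinuousLinearMap.opNorm_nonneg _)
      (ContinuousLinearMap.le_opNorm _ _)
  have hnonneg : 0 ≤ qSpecNorm A :=
    Real.sSup_nonneg fun _ ⟨x, _, h⟩ => h ▸ hratio x ▸ by positivity
  refine le_antisymm (Real.sSup_le hbdd (ContinuousLinearMap.opNorm_nonneg _))
    (ContinuousLinearMap.opNorm_le_bound _ hnonneg fun v => ?_)
  rcases eq_or_ne v 0 with rfl | hv
  · simp
  have hle : ‖toQuaternionCLM A v‖ / ‖v‖ ≤ qSpecNorm A :=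
    le_csSup ⟨_, hbdd⟩ ⟨v.ofLp, by simpa using hv, (hratio v.ofLp).symm⟩
  exact (div_le_iff₀ (norm_pos_iff.2 hv)).1 hle

theorem PolyRightEig.exists_sum_toQuaternionCLM_eq {k n : ℕ}
    {A : ℕ → Matrix (Fin n) (Fin n) ℍ[ℝ]} {lam : ℍ[ℝ]} (h : PolyRightEig k n A lam) :
    ∃ v : EuclideanSpace ℍ[ℝ] (Fin n), v ≠ 0 ∧
      ∑ i ∈ range k, toQuaternionCLM (A i) (MulOpposite.op (lam ^ i) • v) =
        -(MulOpposite.op (lam ^ k) • v) := by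
  obtain ⟨x, hx, hxL⟩ := h
  refine ⟨WithLp.toLp 2 x, by simpa using hx, ?_⟩
  ext j : 1
  simp only [toQuaternionCLM_op_smul]
  simpa [eq_neg_iff_add_eq_zero] using hxL j

theorem sum_toQuaternionCLM_Bseq_eq {m n : ℕ} {A : ℕ → Matrix (Fin n) (Fin n) ℍ[ℝ]}
    {lam : ℍ[ℝ]} (v : EuclideanSpace ℍ[ℝ] (Fin n))
    (h : ∑ i ∈ range (m + 2), toQuaternionCLM (A i) (MulOpposite.op (lam ^ i) • v) =
      -(MulOpposite.op (lam ^ (m + 2)) • v)) :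
    ∑ i ∈ range (m + 2), toQuaternionCLM (Bseq (m + 2) n A i) (MulOpposite.op (lam ^ i) • v) =
      MulOpposite.op (lam ^ (m + 3)) • v := by
  set σ := DistribSMul.toAddMonoidHom (EuclideanSpace ℍ[ℝ] (Fin n)) (MulOpposite.op lam)
  have hσ (i : ℕ) (z : EuclideanSpace ℍ[ℝ] (Fin n)) :
      σ (toQuaternionCLM (A i) • z) = toQuaternionCLM (A i) • σ z := by
    simp only [σ, DistribSMul.toAddMonoidHom_apply, ContinuousLinearMap.smul_def,
      toQuaternionCLM_op_smul]
  have hshift (i : ℕ) :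
      MulOpposite.op (lam ^ (i + 1)) • v = σ (MulOpposite.op (lam ^ i) • v) := by
    simp only [σ, DistribSMul.toAddMonoidHom_apply, pow_succ, MulOpposite.op_mul, mul_smul]
  have hB (i : ℕ) : toQuaternionCLM (Bseq (m + 2) n A i) = toQuaternionCLM (A (m + 1)) *
      toQuaternionCLM (A i) - if i = 0 then 0 else toQuaternionCLM (A (i - 1)) := by
    simp only [Bseq, map_sub, map_mul, apply_ite toQuaternionCLM, map_zero]
    rfl
  simp only [hB, ← ContinuousLinearMap.smul_def]
  exact sum_range_smul_shift (fun i => toQuaternionCLM (A i)) σ hσ _ hshift (m + 1)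
    (by simpa only [ContinuousLinearMap.smul_def] using h)

theorem rightEig_bound_two (k n : ℕ) (hk : 3 ≤ k)
    (A : ℕ → Matrix (Fin n) (Fin n) ℍ[ℝ]) (lam : ℍ[ℝ])
    (hlam : PolyRightEig k n A lam) :
    ‖lam‖ ≤ (1 + (1 / 2) *
      ((Real.sqrt ((1 / 2) * ((∑ i ∈ Finset.range (k - 2), (qSpecNorm (A i) ^ 2 + qSpecNorm (Bseq k n A i) ^ 2)) +
          Real.sqrt ((∑ i ∈ Finset.range (k - 2), (qSpecNorm (A i) ^ 2 - qSpecNorm (Bseq k n A i) ^ 2)) ^ 2 +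
            4 * qSpecNorm (∑ i ∈ Finset.range (k - 2), A i * (Bseq k n A i)ᴴ) ^ 2)))) ^ 2 +
       (Real.sqrt ((1 / 2) * ((∑ i ∈ Finset.Icc (k - 2) (k - 1), (qSpecNorm (A i) ^ 2 + qSpecNorm (Bseq k n A i) ^ 2)) +
          Real.sqrt ((∑ i ∈ Finset.Icc (k - 2) (k - 1), (qSpecNorm (A i) ^ 2 - qSpecNorm (Bseq k n A i) ^ 2)) ^ 2 +
            4 * qSpecNorm (∑ i ∈ Finset.Icc (k - 2) (k - 1), A i * (Bseq k n A i)ᴴ) ^ 2)))) ^ 2 +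
       Real.sqrt (((Real.sqrt ((1 / 2) * ((∑ i ∈ Finset.range (k - 2), (qSpecNorm (A i) ^ 2 + qSpecNorm (Bseq k n A i) ^ 2)) +
            Real.sqrt ((∑ i ∈ Finset.range (k - 2), (qSpecNorm (A i) ^ 2 - qSpecNorm (Bseq k n A i) ^ 2)) ^ 2 +
              4 * qSpecNorm (∑ i ∈ Finset.range (k - 2), A i * (Bseq k n A i)ᴴ) ^ 2)))) ^ 2 +
          (Real.sqrt ((1 / 2) * ((∑ i ∈ Finset.Icc (k - 2) (k - 1), (qSpecNorm (A i) ^ 2 + qSpecNorm (Bseq k n A i) ^ 2)) +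
            Real.sqrt ((∑ i ∈ Finset.Icc (k - 2) (k - 1), (qSpecNorm (A i) ^ 2 - qSpecNorm (Bseq k n A i) ^ 2)) ^ 2 +
              4 * qSpecNorm (∑ i ∈ Finset.Icc (k - 2) (k - 1), A i * (Bseq k n A i)ᴴ) ^ 2)))) ^ 2) ^ 2 +
         4 * (2 * (Real.sqrt ((1 / 2) * ((∑ i ∈ Finset.range (k - 2), (qSpecNorm (A i) ^ 2 + qSpecNorm (Bseq k n A i) ^ 2)) +
            Real.sqrt ((∑ i ∈ Finset.range (k - 2), (qSpecNorm (A i) ^ 2 - qSpecNorm (Bseq k n A i) ^ 2)) ^ 2 +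
              4 * qSpecNorm (∑ i ∈ Finset.range (k - 2), A i * (Bseq k n A i)ᴴ) ^ 2)))) *
            (Real.sqrt ((1 / 2) * ((∑ i ∈ Finset.Icc (k - 2) (k - 1), (qSpecNorm (A i) ^ 2 + qSpecNorm (Bseq k n A i) ^ 2)) +
            Real.sqrt ((∑ i ∈ Finset.Icc (k - 2) (k - 1), (qSpecNorm (A i) ^ 2 - qSpecNorm (Bseq k n A i) ^ 2)) ^ 2 +
              4 * qSpecNorm (∑ i ∈ Finset.Icc (k - 2) (k - 1), A i * (Bseq k n A i)ᴴ) ^ 2)))) + 1))))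
      ^ ((1 : ℝ) / 4) := by
  obtain ⟨m, rfl⟩ : ∃ m, k = m + 2 := ⟨k - 2, by omega⟩
  obtain ⟨v, hv, hE₁⟩ := hlam.exists_sum_toQuaternionCLM_eq
  have hE₂ := sum_toQuaternionCLM_Bseq_eq v hE₁
  have hsplit := sqrt_norm_sq_add_norm_sq_sum_union_le (s := range m) (t := Icc m (m + 1))
    (disjoint_left.2 fun i hi hi' => by rw [mem_range] at hi; rw [mem_Icc] at hi'; omega)
    (fun i => toQuaternionCLM (A i)) (fun i => toQuaternionCLM (Bseq (m + 2) n A i))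
    (fun i => MulOpposite.op (lam ^ i) • v)
  have hunion : range m ∪ Icc m (m + 1) = range (m + 2) := by
    ext; simp only [mem_union, mem_range, mem_Icc]; omega
  have hy (i : ℕ) : ‖MulOpposite.op (lam ^ i) • v‖ = ‖v‖ * ‖lam‖ ^ i := by
    rw [norm_smul, MulOpposite.norm_op, norm_pow, mul_comm]
  have hIcc : ∑ i ∈ Icc m (m + 1), ‖MulOpposite.op (lam ^ i) • v‖ ^ 2 =
      ‖MulOpposite.op (lam ^ m) • v‖ ^ 2 + ‖MulOpposite.op (lam ^ (m + 1)) • v‖ ^ 2 := by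
    rw [sum_Icc_succ_top (by omega), Icc_self, sum_singleton]
  rw [hunion, hE₁, hE₂, norm_neg, hIcc] at hsplit
  simp only [hy] at hsplit
  simp only [show m + 2 - 2 = m by omega, show m + 2 - 1 = m + 1 by omega, qSpecNorm_eq_norm,
    map_sum, map_mul, ← adjoint_toQuaternionCLM, ContinuousLinearMap.mul_def, sum_add_distrib,
    sum_sub_distrib]
  exact le_rpow_quarter_of_geometric_bound m (norm_pos_iff.2 hv) (norm_nonneg lam)
    (Real.sqrt_nonneg _) (Real.sqrt_nonneg _) hsplit
end
end

section
/- If z ∈ ℍ is a zero of the monic quaternionic polynomial p(μ) = μᵏ + a_{k−1}μ^{k−1} + ⋯ + a₀ with k ≥ 4, then |z| ≤ ( 1 + (1/2)[ β₁² + β₂² + √((β₁² + β₂²)² + 4(2β₁β₂ + 1)) ] )^{1/4}, where β₁² = (1/2)[ Σ_{i=0}^{k−3}(|aᵢ|² + |bᵢ|²) + √((Σ_{i=0}^{k−3}(|aᵢ|² − |bᵢ|²))² + 4|Σ_{i=0}^{k−3} aᵢ b̄ᵢ|²) ], β₂² = (1/2)[ Σ_{i=k−2}^{k−1}(|aᵢ|²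 + |bᵢ|²) + √((Σ_{i=k−2}^{k−1}(|aᵢ|² − |bᵢ|²))² + 4|Σ_{i=k−2}^{k−1} aᵢ b̄ᵢ|²) ], and bᵢ = a_{k−1}aᵢ − a_{i−1} with a_{−1} = 0. -/
open scoped Matrix Quaternion BigOperators

noncomputable section

/-!
Write `t = ‖z‖`. From `z ^ k = -∑ aᵢ zⁱ` and `z ^ (k + 1) = ∑ bᵢ zⁱ`, the pair
`(z ^ k, z ^ (k + 1))` is the image of `(zⁱ)ᵢ` under the quaternionic `2 × k` matrix with rows
`a` and `b`. Split its columns into `i < k - 2` and `i ∈ {k - 2, k - 1}`: the spectral norm of each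
block is `βⱼ`, the square root of the top eigenvalue of its `2 × 2` Gram matrix (tested against the
dual vector `(z̄ᵏ, z̄ᵏ⁺¹)`), so Minkowski's inequality gives
`tᵏ √(1 + t²) ≤ β₁ (∑_{i < k-2} t²ⁱ)^{1/2} + β₂ tᵏ⁻² √(1 + t²)`.
For `t > 1` the geometric series turns this into `t² s ≤ β₁ + β₂ s` with `s = √(t⁴ - 1)`, and the
Rayleigh quotient of `!![β₁², β₁β₂ + 1; β₁β₂ + 1, β₂²]` at `(1, s)` then shows that `s²` is at
most its top eigenvalue, which is the expression in the bound.
-/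

/-- The largest eigenvalue of the real symmetric matrix `!![A, c; c, B]`. -/
def sym2MaxEig (A B c : ℝ) : ℝ := (1 / 2) * (A + B + √((A - B) ^ 2 + 4 * c ^ 2))

lemma quadForm_le_sym2MaxEig (A B c p q : ℝ) :
    p ^ 2 * A + q ^ 2 * B + 2 * p * q * c ≤ sym2MaxEig A B c * (p ^ 2 + q ^ 2) := by
  have hR := Real.sq_sqrt (show 0 ≤ (A - B) ^ 2 + 4 * c ^ 2 by positivity)
  have hR0 := Real.sqrt_nonneg ((A - B) ^ 2 + 4 * c ^ 2)
  unfold sym2MaxEig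
  generalize √((A - B) ^ 2 + 4 * c ^ 2) = R at hR hR0 ⊢
  rcases hR0.eq_or_lt with rfl | hRpos
  · have hc : c = 0 := by nlinarith [sq_nonneg (A - B), sq_nonneg c]
    have hAB : A = B := by nlinarith [sq_nonneg (A - B), sq_nonneg c]
    subst hc hAB
    nlinarith
  · -- `R - (A - B)` and `R + (A - B)` multiply to `4 c²`, so `R` times this form is a sum of
    -- two squares
    have key : 0 ≤ R * (p ^ 2 * (R - (A - B)) + q ^ 2 * (R + (A - B)) - 4 * p * q * c) := by
      nlinarith [sq_nonneg (p * (R - (A - B)) - 2 * c * q),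
        sq_nonneg (q * (R + (A - B)) - 2 * c * p)]
    nlinarith [(mul_nonneg_iff_of_pos_left hRpos).1 key]

lemma sqrt_norm_add_sq_add_le {E : Type*} [SeminormedAddCommGroup E] (x₁ x₂ y₁ y₂ : E) :
    √(‖x₁ + x₂‖ ^ 2 + ‖y₁ + y₂‖ ^ 2) ≤ √(‖x₁‖ ^ 2 + ‖y₁‖ ^ 2) + √(‖x₂‖ ^ 2 + ‖y₂‖ ^ 2) := by
  simpa [WithLp.prod_norm_eq_of_L2] using
    norm_add_le (WithLp.toLp 2 (x₁, y₁)) (WithLp.toLp 2 (x₂, y₂))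

lemma Finset.sum_Icc_sub_two_sub_one {M : Type*} [AddCommMonoid M] {k : ℕ} (hk : 2 ≤ k)
    (f : ℕ → M) : ∑ i ∈ Finset.Icc (k - 2) (k - 1), f i = f (k - 2) + f (k - 1) := by
  have hIcc : Finset.Icc (k - 2) (k - 1) = {k - 2, k - 1} := by ext j; simp; omega
  rw [hIcc, Finset.sum_pair (by omega)]

lemma Finset.sum_range_eq_sum_range_sub_two_add {M : Type*} [AddCommMonoid M] {k : ℕ}
    (hk : 2 ≤ k) (f : ℕ → M) :
    ∑ i ∈ Finset.range k, f i =
      ∑ i ∈ Finset.range (k - 2), f i + ∑ i ∈ Finset.Icc (k - 2) (k - 1), f i := by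
  obtain ⟨n, rfl⟩ : ∃ n, k = n + 2 := ⟨k - 2, by omega⟩
  rw [Finset.sum_Icc_sub_two_sub_one hk]
  simp [Finset.sum_range_succ, add_assoc]

section

variable {ι : Type*}

lemma sum_norm_mul_add_mul_sq_le (s : Finset ι) (a b : ι → ℍ[ℝ]) (α β : ℍ[ℝ]) :
    ∑ i ∈ s, ‖α * a i + β * b i‖ ^ 2 ≤
      sym2MaxEig (∑ i ∈ s, ‖a i‖ ^ 2) (∑ i ∈ s, ‖b i‖ ^ 2) ‖∑ i ∈ s, a i * star (b i)‖ *
        (‖α‖ ^ 2 + ‖β‖ ^ 2) := by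
  have hinner : ∀ i, inner ℝ (α * a i) (β * b i) = inner ℝ (α * (a i * star (b i))) β := by
    intro i
    simp only [Quaternion.inner_def, star_mul, mul_assoc]
  have hexpand : ∑ i ∈ s, ‖α * a i + β * b i‖ ^ 2 =
      ‖α‖ ^ 2 * ∑ i ∈ s, ‖a i‖ ^ 2 + ‖β‖ ^ 2 * ∑ i ∈ s, ‖b i‖ ^ 2 +
        2 * inner ℝ (α * ∑ i ∈ s, a i * star (b i)) β := by
    simp only [norm_add_sq_real, norm_mul, mul_pow, hinner, Finset.sum_add_distrib,
      Finset.mul_sum, sum_inner]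
    ring
  have hcross : inner ℝ (α * ∑ i ∈ s, a i * star (b i)) β ≤
      ‖α‖ * ‖β‖ * ‖∑ i ∈ s, a i * star (b i)‖ :=
    (real_inner_le_norm _ _).trans_eq (by rw [norm_mul]; ring)
  rw [hexpand]
  nlinarith [quadForm_le_sym2MaxEig (∑ i ∈ s, ‖a i‖ ^ 2) (∑ i ∈ s, ‖b i‖ ^ 2)
    ‖∑ i ∈ s, a i * star (b i)‖ ‖α‖ ‖β‖]

lemma sqrt_norm_sum_mul_sq_add_le (s : Finset ι) (a b v : ι → ℍ[ℝ]) :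
    √(‖∑ i ∈ s, a i * v i‖ ^ 2 + ‖∑ i ∈ s, b i * v i‖ ^ 2) ≤
      √((1 / 2) * ((∑ i ∈ s, (‖a i‖ ^ 2 + ‖b i‖ ^ 2)) +
        √((∑ i ∈ s, (‖a i‖ ^ 2 - ‖b i‖ ^ 2)) ^ 2 + 4 * ‖∑ i ∈ s, a i * star (b i)‖ ^ 2))) *
      √(∑ i ∈ s, ‖v i‖ ^ 2) := by
  rw [Finset.sum_add_distrib, Finset.sum_sub_distrib]
  set M := sym2MaxEig (∑ i ∈ s, ‖a i‖ ^ 2) (∑ i ∈ s, ‖b i‖ ^ 2) ‖∑ i ∈ s, a i * star (b i)‖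
  change _ ≤ √M * _
  set x := ∑ i ∈ s, a i * v i
  set y := ∑ i ∈ s, b i * v i
  set r := √(‖x‖ ^ 2 + ‖y‖ ^ 2)
  have hr0 : 0 ≤ r := Real.sqrt_nonneg _
  have hdual : ∑ i ∈ s, (star x * a i + star y * b i) * v i = star x * x + star y * y := by
    simp only [add_mul, mul_assoc, Finset.sum_add_distrib, ← Finset.mul_sum]; rfl
  have hr : r ^ 2 = ‖star x * x + star y * y‖ := by
    rw [Quaternion.star_mul_self, Quaternion.star_mul_self, Quaternion.normSq_eq_norm_mul_self,
      Quaternion.normSq_eq_norm_mul_self, ← Quaternion.coe_add, Quaternion.norm_coe,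
      Real.norm_of_nonneg (by positivity), Real.sq_sqrt (by positivity), sq, sq]
  have key : r * r ≤ r * (√M * √(∑ i ∈ s, ‖v i‖ ^ 2)) := calc
    r * r = ‖∑ i ∈ s, (star x * a i + star y * b i) * v i‖ := by rw [hdual, ← hr, sq]
    _ ≤ ∑ i ∈ s, ‖star x * a i + star y * b i‖ * ‖v i‖ := by
      simpa only [norm_mul] using norm_sum_le s fun i => (star x * a i + star y * b i) * v i
    _ ≤ √(∑ i ∈ s, ‖star x * a i + star y * b i‖ ^ 2) * √(∑ i ∈ s, ‖v i‖ ^ 2) :=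
      Real.sum_mul_le_sqrt_mul_sqrt _ _ _
    _ ≤ √(M * r ^ 2) * √(∑ i ∈ s, ‖v i‖ ^ 2) := by
      gcongr
      rw [Real.sq_sqrt (by positivity)]
      simpa only [Quaternion.norm_star] using sum_norm_mul_add_mul_sq_le s a b (star x) (star y)
    _ = _ := by rw [Real.sqrt_mul' _ (sq_nonneg r), Real.sqrt_sq hr0]; ring
  rcases hr0.eq_or_lt with hr_eq | hr_pos
  · rw [← hr_eq]; positivity
  · exact le_of_mul_le_mul_left key hr_pos

end

namespace IsPolyZero

variable {k : ℕ} {a : ℕ → ℍ[ℝ]} {z : ℍ[ℝ]}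

lemma pow_eq_neg_sum (hz : IsPolyZero k a z) : z ^ k = -∑ i ∈ Finset.range k, a i * z ^ i :=
  eq_neg_of_add_eq_zero_right hz

-- multiplying `p(z) = 0` by `z` and eliminating `z ^ k` once more
lemma pow_succ_eq_sum_bseq (hz : IsPolyZero k a z) (hk : 1 ≤ k) :
    z ^ (k + 1) = ∑ i ∈ Finset.range k, bseq k a i * z ^ i := by
  obtain ⟨n, rfl⟩ : ∃ n, k = n + 1 := ⟨k - 1, by omega⟩
  have hsum : ∑ i ∈ Finset.range (n + 1), a i * z ^ i = -z ^ (n + 1) :=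
    eq_neg_of_add_eq_zero_left hz
  have hlhs :
      z ^ (n + 1 + 1) = -∑ i ∈ Finset.range (n + 1), a i * z ^ (i + 1) := by
    rw [pow_succ, hz.pow_eq_neg_sum, neg_mul, Finset.sum_mul]
    simp only [mul_assoc, ← pow_succ]
  have hrhs : ∑ i ∈ Finset.range (n + 1), bseq (n + 1) a i * z ^ i =
      a n * -z ^ (n + 1) - ∑ i ∈ Finset.range n, a i * z ^ (i + 1) := by
    simp only [bseq, Nat.add_sub_cancel, sub_mul, Finset.sum_sub_distrib, mul_assoc,
      ← Finset.mul_sum, hsum]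
    rw [Finset.sum_range_succ' (fun i => (if i = 0 then 0 else a (i - 1)) * z ^ i)]
    simp
  rw [hlhs, hrhs, Finset.sum_range_succ, mul_neg]
  abel

lemma sqrt_norm_pow_sq_add_le (hz : IsPolyZero k a z) (hk : 2 ≤ k) :
    √((‖z‖ ^ k) ^ 2 + (‖z‖ ^ (k + 1)) ^ 2) ≤
      √(‖∑ i ∈ Finset.range (k - 2), a i * z ^ i‖ ^ 2 +
          ‖∑ i ∈ Finset.range (k - 2), bseq k a i * z ^ i‖ ^ 2) +
        √(‖∑ i ∈ Finset.Icc (k - 2) (k - 1), a i * z ^ i‖ ^ 2 +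
          ‖∑ i ∈ Finset.Icc (k - 2) (k - 1), bseq k a i * z ^ i‖ ^ 2) := by
  rw [← norm_pow z k, ← norm_pow z (k + 1), hz.pow_eq_neg_sum,
    hz.pow_succ_eq_sum_bseq (by omega), norm_neg, Finset.sum_range_eq_sum_range_sub_two_add hk,
    Finset.sum_range_eq_sum_range_sub_two_add hk]
  exact sqrt_norm_add_sq_add_le _ _ _ _

end IsPolyZero
lemma sqrt_pow_sq_add_pow_succ_sq {t : ℝ} (ht : 0 ≤ t) (m : ℕ) :
    √((t ^ m) ^ 2 + (t ^ (m + 1)) ^ 2) = t ^ m * √(1 + t ^ 2) := by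
  rw [show (t ^ m) ^ 2 + (t ^ (m + 1)) ^ 2 = (t ^ m) ^ 2 * (1 + t ^ 2) by ring,
    Real.sqrt_mul (by positivity), Real.sqrt_sq (by positivity)]

lemma sqrt_sum_range_pow_sq_mul_le {t : ℝ} (ht : 1 ≤ t) (n : ℕ) :
    √(∑ i ∈ Finset.range n, (t ^ i) ^ 2) * √(t ^ 2 - 1) ≤ t ^ n := by
  have hgeom : (∑ i ∈ Finset.range n, (t ^ i) ^ 2) * (t ^ 2 - 1) ≤ (t ^ n) ^ 2 := by
    have hsq : ∀ i, (t ^ i) ^ 2 = (t ^ 2) ^ i := fun i => by ring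
    simp only [hsq, geom_sum_mul]
    linarith
  rw [← Real.sqrt_mul (by positivity), ← Real.sqrt_sq (by positivity : 0 ≤ t ^ n)]
  exact Real.sqrt_le_sqrt hgeom

lemma sq_mul_sqrt_le_of_sqrt_pow_sq_add_le {t β₁ β₂ : ℝ} {k : ℕ} (hk : 2 ≤ k) (ht : 1 < t)
    (hβ₁ : 0 ≤ β₁)
    (h : √((t ^ k) ^ 2 + (t ^ (k + 1)) ^ 2) ≤
      β₁ * √(∑ i ∈ Finset.range (k - 2), (t ^ i) ^ 2) +
        β₂ * √(∑ i ∈ Finset.Icc (k - 2) (k - 1), (t ^ i) ^ 2)) :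
    t ^ 2 * √(t ^ 4 - 1) ≤ β₁ + β₂ * √(t ^ 4 - 1) := by
  rw [Finset.sum_Icc_sub_two_sub_one hk] at h
  obtain ⟨n, rfl⟩ : ∃ n, k = n + 2 := ⟨k - 2, by omega⟩
  simp only [show n + 2 - 2 = n by omega, show n + 2 - 1 = n + 1 by omega,
    sqrt_pow_sq_add_pow_succ_sq (zero_le_one.trans ht.le)] at h
  have hT : 0 < t ^ n := by positivity
  have hu : √(1 + t ^ 2) * √(t ^ 2 - 1) = √(t ^ 4 - 1) := by
    rw [← Real.sqrt_mul (by positivity)]; ring_nf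
  have key : t ^ n * (t ^ 2 * √(t ^ 4 - 1)) ≤ t ^ n * (β₁ + β₂ * √(t ^ 4 - 1)) := calc
    t ^ n * (t ^ 2 * √(t ^ 4 - 1)) = t ^ (n + 2) * √(1 + t ^ 2) * √(t ^ 2 - 1) := by
      rw [← hu]; ring
    _ ≤ (β₁ * √(∑ i ∈ Finset.range n, (t ^ i) ^ 2) + β₂ * (t ^ n * √(1 + t ^ 2))) *
        √(t ^ 2 - 1) := by gcongr
    _ = β₁ * (√(∑ i ∈ Finset.range n, (t ^ i) ^ 2) * √(t ^ 2 - 1)) +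
        β₂ * t ^ n * √(t ^ 4 - 1) := by rw [← hu]; ring
    _ ≤ β₁ * t ^ n + β₂ * t ^ n * √(t ^ 4 - 1) := by
      gcongr; exact sqrt_sum_range_pow_sq_mul_le ht.le n
    _ = t ^ n * (β₁ + β₂ * √(t ^ 4 - 1)) := by ring
  exact le_of_mul_le_mul_left key hT

lemma pow_four_le_of_sq_mul_sqrt_le {t β₁ β₂ : ℝ} (ht : 1 < t)
    (h : t ^ 2 * √(t ^ 4 - 1) ≤ β₁ + β₂ * √(t ^ 4 - 1)) :
    t ^ 4 ≤ 1 + sym2MaxEig (β₁ ^ 2) (β₂ ^ 2) (β₁ * β₂ + 1) := by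
  set s := √(t ^ 4 - 1)
  have hs : s ^ 2 = t ^ 4 - 1 := Real.sq_sqrt (by linarith [one_le_pow₀ (n := 4) ht.le])
  have hs0 : 0 ≤ s := Real.sqrt_nonneg _
  have hsq : (t ^ 2 * s) ^ 2 ≤ (β₁ + β₂ * s) ^ 2 := pow_le_pow_left₀ (by positivity) h 2
  -- the Rayleigh quotient of `!![β₁², β₁β₂ + 1; β₁β₂ + 1, β₂²]` at `(1, s)`
  have hquad := quadForm_le_sym2MaxEig (β₁ ^ 2) (β₂ ^ 2) (β₁ * β₂ + 1) 1 s
  have hmul : s ^ 2 * (1 + s ^ 2) ≤ sym2MaxEig (β₁ ^ 2) (β₂ ^ 2) (β₁ * β₂ + 1) * (1 + s ^ 2) := by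
    nlinarith
  linarith [le_of_mul_le_mul_right hmul (by positivity)]

lemma le_rpow_of_sq_mul_sqrt_le {t β₁ β₂ : ℝ} (ht : 0 ≤ t)
    (h : 1 < t → t ^ 2 * √(t ^ 4 - 1) ≤ β₁ + β₂ * √(t ^ 4 - 1)) :
    t ≤ (1 + (1 / 2) * (β₁ ^ 2 + β₂ ^ 2 +
      √((β₁ ^ 2 + β₂ ^ 2) ^ 2 + 4 * (2 * β₁ * β₂ + 1)))) ^ ((1 : ℝ) / 4) := by
  have heig : sym2MaxEig (β₁ ^ 2) (β₂ ^ 2) (β₁ * β₂ + 1) =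
      (1 / 2) * (β₁ ^ 2 + β₂ ^ 2 + √((β₁ ^ 2 + β₂ ^ 2) ^ 2 + 4 * (2 * β₁ * β₂ + 1))) := by
    unfold sym2MaxEig; ring_nf
  have heig0 : 0 ≤ sym2MaxEig (β₁ ^ 2) (β₂ ^ 2) (β₁ * β₂ + 1) := by rw [heig]; positivity
  rw [← heig, one_div, Real.le_rpow_inv_iff_of_pos ht (by positivity) (by norm_num)]
  norm_cast
  rcases le_or_gt t 1 with h1 | h1
  · linarith [pow_le_one₀ ht h1 (n := 4)]
  · exact pow_four_le_of_sq_mul_sqrt_le h1 (h h1)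

theorem zero_bound_two (k : ℕ) (hk : 4 ≤ k) (a : ℕ → ℍ[ℝ]) (z : ℍ[ℝ])
    (hz : IsPolyZero k a z) :
    ‖z‖ ≤ (1 + (1 / 2) *
      ((Real.sqrt ((1 / 2) * ((∑ i ∈ Finset.range (k - 2), (‖a i‖ ^ 2 + ‖bseq k a i‖ ^ 2)) +
          Real.sqrt ((∑ i ∈ Finset.range (k - 2), (‖a i‖ ^ 2 - ‖bseq k a i‖ ^ 2)) ^ 2 +
            4 * ‖∑ i ∈ Finset.range (k - 2), a i * star (bseq k a i)‖ ^ 2)))) ^ 2 +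
       (Real.sqrt ((1 / 2) * ((∑ i ∈ Finset.Icc (k - 2) (k - 1), (‖a i‖ ^ 2 + ‖bseq k a i‖ ^ 2)) +
          Real.sqrt ((∑ i ∈ Finset.Icc (k - 2) (k - 1), (‖a i‖ ^ 2 - ‖bseq k a i‖ ^ 2)) ^ 2 +
            4 * ‖∑ i ∈ Finset.Icc (k - 2) (k - 1), a i * star (bseq k a i)‖ ^ 2)))) ^ 2 +
       Real.sqrt (((Real.sqrt ((1 / 2) * ((∑ i ∈ Finset.range (k - 2), (‖a i‖ ^ 2 + ‖bseq k a i‖ ^ 2)) +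
            Real.sqrt ((∑ i ∈ Finset.range (k - 2), (‖a i‖ ^ 2 - ‖bseq k a i‖ ^ 2)) ^ 2 +
              4 * ‖∑ i ∈ Finset.range (k - 2), a i * star (bseq k a i)‖ ^ 2)))) ^ 2 +
          (Real.sqrt ((1 / 2) * ((∑ i ∈ Finset.Icc (k - 2) (k - 1), (‖a i‖ ^ 2 + ‖bseq k a i‖ ^ 2)) +
            Real.sqrt ((∑ i ∈ Finset.Icc (k - 2) (k - 1), (‖a i‖ ^ 2 - ‖bseq k a i‖ ^ 2)) ^ 2 +
              4 * ‖∑ i ∈ Finset.Icc (k - 2) (k - 1), a i * star (bseq k a i)‖ ^ 2)))) ^ 2) ^ 2 +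
         4 * (2 * (Real.sqrt ((1 / 2) * ((∑ i ∈ Finset.range (k - 2), (‖a i‖ ^ 2 + ‖bseq k a i‖ ^ 2)) +
            Real.sqrt ((∑ i ∈ Finset.range (k - 2), (‖a i‖ ^ 2 - ‖bseq k a i‖ ^ 2)) ^ 2 +
              4 * ‖∑ i ∈ Finset.range (k - 2), a i * star (bseq k a i)‖ ^ 2)))) *
            (Real.sqrt ((1 / 2) * ((∑ i ∈ Finset.Icc (k - 2) (k - 1), (‖a i‖ ^ 2 + ‖bseq k a i‖ ^ 2)) +
            Real.sqrt ((∑ i ∈ Finset.Icc (k - 2) (k - 1), (‖a i‖ ^ 2 - ‖bseq k a i‖ ^ 2)) ^ 2 +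
              4 * ‖∑ i ∈ Finset.Icc (k - 2) (k - 1), a i * star (bseq k a i)‖ ^ 2)))) + 1))))
      ^ ((1 : ℝ) / 4) := by
  refine le_rpow_of_sq_mul_sqrt_le (norm_nonneg z) fun ht => ?_
  refine sq_mul_sqrt_le_of_sqrt_pow_sq_add_le (k := k) (by omega) ht (Real.sqrt_nonneg _) ?_
  refine (hz.sqrt_norm_pow_sq_add_le (by omega)).trans ?_
  simpa only [norm_pow] using
    add_le_add (sqrt_norm_sum_mul_sq_add_le _ a (bseq k a) fun i => z ^ i)
      (sqrt_norm_sum_mul_sq_add_le _ a (bseq k a) fun i => z ^ i)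
end
end

section
/- If z ∈ ℍ is a zero of the monic quaternionic polynomial p(μ) = μᵏ + a_{k−1}μ^{k−1} + ⋯ + a₀ of degree k ≥ 5, then |z| ≤ ( (1/2)[ η₁ + η₂ + √((η₁ − η₂)² + 4τ₁τ₂) ] )^{1/3}, where η₁² = (1/2)[ Σ_{i=k−2}^{k−1}(|bᵢ|² + |cᵢ|²) + √((Σ_{i=k−2}^{k−1}(|bᵢ|² − |cᵢ|²))² + 4|Σ_{i=k−2}^{k−1} bᵢc̄ᵢ|²) ], η₂² = (1/2)[ 1 + Σ_{i=0}^{k−3}|aᵢ|² + √((1 + Σ_{i=0}^{k−3}|aᵢ|²)² − 4(|a₀|² + |a₁|² + |a₂|²)) ], τ₁ = √(|a_{k−1}|² + |a_{k−2}|² + 1), τ₂² = (1/2)[ Σ_{i=0}^{k−3}(|bᵢ|² + |cᵢ|²) + √((Σ_{i=0}^{k−3}(|bᵢ|² − |cᵢ|²))² + 4|Σ_{i=0}^{k−3} bᵢc̄ᵢ|²) ], with bᵢ = a_{k−1}aᵢ − a_{i−1}, cᵢ = −a_{k−1}bᵢ + a_{k−2}aᵢ − a_{i−2}, a_{−1}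 = a_{−2} = 0. -/
/-!
A zero `z` makes `u = (1, z, …, z^{k-1})` a right eigenvector of the companion matrix `C`, so
`C³ u = u z³`. Split `u` into `x = (zⁱ)_{i<k-2}` and `y = (z^{k-2}, z^{k-1})`: the rows of `C³`
are shifted unit vectors together with the coefficient rows `(aᵢ)`, `(bᵢ)`, `(cᵢ)` of `z^k`,
`z^{k+1}`, `z^{k+2}` in the basis `1, …, z^{k-1}`. Bounding the four blocks of `C³` by their
spectral norms gives `|z|³‖x‖ ≤ η₂‖x‖ + τ₁‖y‖` and `|z|³‖y‖ ≤ τ₂‖x‖ + η₁‖y‖`, and as `‖x‖ ≥ 1`,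
the Collatz–Wielandt bound puts `|z|³` below the Perron root of `[[η₂, τ₁], [τ₂, η₁]]`.
-/

open scoped Matrix Quaternion BigOperators

noncomputable section

open Finset

lemma norm_sum_mul_le_sqrt_mul_sqrt {R ι : Type*} [SeminormedRing R] (s : Finset ι)
    (d x : ι → R) :
    ‖∑ i ∈ s, d i * x i‖ ≤ √(∑ i ∈ s, ‖d i‖ ^ 2) * √(∑ i ∈ s, ‖x i‖ ^ 2) :=
  calc ‖∑ i ∈ s, d i * x i‖ ≤ ∑ i ∈ s, ‖d i‖ * ‖x i‖ :=
        (norm_sum_le _ _).trans (sum_le_sum fun _ _ => norm_mul_le _ _)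
    _ ≤ _ := Real.sum_mul_le_sqrt_mul_sqrt s _ _

lemma norm_sq_add_norm_sq_add_norm_mul_add_mul_sq_le {R : Type*} [SeminormedRing R]
    (a₀ a₁ y₀ y₁ : R) :
    ‖y₀‖ ^ 2 + ‖y₁‖ ^ 2 + ‖a₀ * y₀ + a₁ * y₁‖ ^ 2 ≤
      (‖a₁‖ ^ 2 + ‖a₀‖ ^ 2 + 1) * (‖y₀‖ ^ 2 + ‖y₁‖ ^ 2) := by
  have h : ‖a₀ * y₀ + a₁ * y₁‖ ≤ ‖a₀‖ * ‖y₀‖ + ‖a₁‖ * ‖y₁‖ :=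
    (norm_add_le _ _).trans (add_le_add (norm_mul_le _ _) (norm_mul_le _ _))
  have h2 : ‖a₀ * y₀ + a₁ * y₁‖ ^ 2 ≤ (‖a₀‖ * ‖y₀‖ + ‖a₁‖ * ‖y₁‖) ^ 2 := by gcongr
  nlinarith [sq_nonneg (‖a₀‖ * ‖y₁‖ - ‖a₁‖ * ‖y₀‖)]

lemma Real.sqrt_le_sqrt_mul_sqrt_of_le_mul {x c u : ℝ} (hc : 0 ≤ c) (h : x ≤ c * u) :
    √x ≤ √c * √u :=
  (Real.sqrt_le_sqrt h).trans_eq (Real.sqrt_mul hc u)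

lemma Real.sqrt_add_sq_le {a b c d E f : ℝ} (hE : E ≤ (a + b) ^ 2) (hf : 0 ≤ f)
    (hcd : f ≤ c + d) : √(E + f ^ 2) ≤ √(a ^ 2 + c ^ 2) + √(b ^ 2 + d ^ 2) := by
  have h := norm_add_le !₂[a, c] !₂[b, d]
  simp only [EuclideanSpace.norm_eq, Fin.sum_univ_two, WithLp.ofLp_add, Pi.add_apply,
    Matrix.cons_val_zero, Matrix.cons_val_one, Real.norm_eq_abs, sq_abs] at h
  refine le_trans (Real.sqrt_le_sqrt ?_) h
  gcongr

/-- `(B + C + √((B - C)² + 4G²)) / 2` is the largest eigenvalue of `[[B, G], [G, C]]`. -/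
lemma quadForm_le (B C G s t : ℝ) :
    B * s ^ 2 + C * t ^ 2 + 2 * G * s * t ≤
      (1 / 2) * (B + C + √((B - C) ^ 2 + 4 * G ^ 2)) * (s ^ 2 + t ^ 2) := by
  have hD : √((B - C) ^ 2 + 4 * G ^ 2) ^ 2 = (B - C) ^ 2 + 4 * G ^ 2 :=
    Real.sq_sqrt (by positivity)
  have hD0 : 0 ≤ √((B - C) ^ 2 + 4 * G ^ 2) := Real.sqrt_nonneg _
  generalize √((B - C) ^ 2 + 4 * G ^ 2) = D at hD hD0 ⊢
  rcases hD0.eq_or_lt with rfl | hpos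
  · obtain rfl : G = 0 := by nlinarith [sq_nonneg (B - C), sq_nonneg G]
    obtain rfl : B = C := by nlinarith [sq_nonneg (B - C)]
    linarith
  · have key : 4 * D * ((1 / 2) * (B + C + D) * (s ^ 2 + t ^ 2) -
          (B * s ^ 2 + C * t ^ 2 + 2 * G * s * t)) =
        ((D - (B - C)) * s - 2 * G * t) ^ 2 + ((D + (B - C)) * t - 2 * G * s) ^ 2 := by
      linear_combination (s ^ 2 + t ^ 2) * hD
    nlinarith [sq_nonneg ((D - (B - C)) * s - 2 * G * t),
      sq_nonneg ((D + (B - C)) * t - 2 * G * s)]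

/-- A positive subinvariant vector `(α, β)` of the nonnegative matrix `[[a, b], [c, d]]` bounds
`ρ` by its Perron root. -/
lemma le_perronRoot {ρ α β a b c d : ℝ} (hα : 0 < α) (hb : 0 ≤ b) (hc : 0 ≤ c)
    (h₁ : ρ * α ≤ a * α + b * β) (h₂ : ρ * β ≤ c * α + d * β) :
    ρ ≤ (1 / 2) * (d + a + √((d - a) ^ 2 + 4 * b * c)) := by
  have hD : √((d - a) ^ 2 + 4 * b * c) ^ 2 = (d - a) ^ 2 + 4 * b * c :=
    Real.sq_sqrt (by positivity)
  have hD0 : 0 ≤ √((d - a) ^ 2 + 4 * b * c) := Real.sqrt_nonneg _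
  generalize √((d - a) ^ 2 + 4 * b * c) = D at hD hD0 ⊢
  rcases le_or_gt ρ a with ha | ha
  · nlinarith [sq_nonneg (D - (a - d)), mul_nonneg hb hc]
  rcases le_or_gt ρ d with hd | hd
  · nlinarith [sq_nonneg (D - (d - a)), mul_nonneg hb hc]
  have hβ : 0 < β := by
    by_contra! hβ
    nlinarith [mul_nonpos_iff.2 (Or.inl ⟨hb, hβ⟩), mul_pos (sub_pos.2 ha) hα]
  have hprod : (ρ - a) * α * ((ρ - d) * β) ≤ b * β * (c * α) :=
    mul_le_mul (by linarith) (by linarith) (by positivity) (by positivity)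
  have hgap : (ρ - a) * (ρ - d) ≤ b * c :=
    le_of_mul_le_mul_right (by linarith : (ρ - a) * (ρ - d) * (α * β) ≤ b * c * (α * β))
      (by positivity)
  nlinarith

namespace Quaternion

lemma re_le_norm (x : ℍ[ℝ]) : x.re ≤ ‖x‖ := by
  simpa [inner_def] using real_inner_le_norm x 1

lemma re_sum {ι : Type*} (s : Finset ι) (f : ι → ℍ[ℝ]) :
    (∑ i ∈ s, f i).re = ∑ i ∈ s, (f i).re :=
  map_sum (QuaternionAlgebra.reₗ _ _ _) f s

lemma norm_sq_eq_re_star_mul (x : ℍ[ℝ]) : ‖x‖ ^ 2 = (star x * x).re := by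
  rw [star_mul_self, re_coe, normSq_eq_norm_mul_self, sq]

end Quaternion

section TwoRow

variable {ι : Type*} (s : Finset ι) (b c : ι → ℍ[ℝ])

/-- The squared spectral norm of the `2 × s` quaternionic matrix with rows `b` and `c`, i.e. the
largest eigenvalue of its Gram matrix. -/
def twoRowNormSq : ℝ :=
  (1 / 2) * ((∑ i ∈ s, (‖b i‖ ^ 2 + ‖c i‖ ^ 2)) +
    √((∑ i ∈ s, (‖b i‖ ^ 2 - ‖c i‖ ^ 2)) ^ 2 + 4 * ‖∑ i ∈ s, b i * star (c i)‖ ^ 2))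

lemma twoRowNormSq_nonneg : 0 ≤ twoRowNormSq s b c := by
  unfold twoRowNormSq; positivity

lemma sum_norm_sq_star_mul_add_le (p q : ℍ[ℝ]) :
    ∑ i ∈ s, ‖star p * b i + star q * c i‖ ^ 2 ≤ twoRowNormSq s b c * (‖p‖ ^ 2 + ‖q‖ ^ 2) := by
  have hcross : ∑ i ∈ s, (star p * b i * star (star q * c i)).re ≤
      ‖p‖ * ‖∑ i ∈ s, b i * star (c i)‖ * ‖q‖ := by
    have : ∑ i ∈ s, star p * b i * star (star q * c i) =
        star p * (∑ i ∈ s, b i * star (c i)) * q := by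
      simp only [star_mul, star_star, mul_sum, sum_mul, mul_assoc]
    rw [← Quaternion.re_sum, this]
    simpa [norm_mul] using Quaternion.re_le_norm (star p * (∑ i ∈ s, b i * star (c i)) * q)
  calc ∑ i ∈ s, ‖star p * b i + star q * c i‖ ^ 2
      = (∑ i ∈ s, ‖b i‖ ^ 2) * ‖p‖ ^ 2 + (∑ i ∈ s, ‖c i‖ ^ 2) * ‖q‖ ^ 2 +
          2 * ∑ i ∈ s, (star p * b i * star (star q * c i)).re := by
        simp only [norm_add_sq_real, Quaternion.inner_def, norm_mul, norm_star, sum_add_distrib,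
          mul_sum, sum_mul]
        ring_nf
    _ ≤ _ := by
        have := quadForm_le (∑ i ∈ s, ‖b i‖ ^ 2) (∑ i ∈ s, ‖c i‖ ^ 2)
          ‖∑ i ∈ s, b i * star (c i)‖ ‖p‖ ‖q‖
        rw [twoRowNormSq, sum_add_distrib, sum_sub_distrib]
        linarith

theorem norm_sq_add_norm_sq_le_twoRowNormSq (u : ι → ℍ[ℝ]) :
    ‖∑ i ∈ s, b i * u i‖ ^ 2 + ‖∑ i ∈ s, c i * u i‖ ^ 2 ≤
      twoRowNormSq s b c * ∑ i ∈ s, ‖u i‖ ^ 2 := by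
  set p := ∑ i ∈ s, b i * u i
  set q := ∑ i ∈ s, c i * u i
  set U := ∑ i ∈ s, ‖u i‖ ^ 2
  have hM := twoRowNormSq_nonneg s b c
  have hU : 0 ≤ U := sum_nonneg fun _ _ => sq_nonneg _
  -- With `M` the matrix of rows `b`, `c`: `‖Mu‖² = Re ⟪M* (Mu), u⟫`, and `M*` is controlled by
  -- the `2 × 2` Gram matrix of `M`.
  have hpq : ‖p‖ ^ 2 + ‖q‖ ^ 2 = (∑ i ∈ s, (star p * b i + star q * c i) * u i).re := by
    simp only [Quaternion.norm_sq_eq_re_star_mul, ← Quaternion.re_add, add_mul, sum_add_distrib,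
      mul_assoc, ← mul_sum, p, q]
  have hsq : (‖p‖ ^ 2 + ‖q‖ ^ 2) ^ 2 ≤ twoRowNormSq s b c * (‖p‖ ^ 2 + ‖q‖ ^ 2) * U := by
    have h := (Quaternion.re_le_norm _).trans
      (norm_sum_mul_le_sqrt_mul_sqrt s (fun i => star p * b i + star q * c i) u)
    rw [← hpq] at h
    calc (‖p‖ ^ 2 + ‖q‖ ^ 2) ^ 2
        ≤ (√(∑ i ∈ s, ‖star p * b i + star q * c i‖ ^ 2) * √U) ^ 2 := by gcongr
      _ = (∑ i ∈ s, ‖star p * b i + star q * c i‖ ^ 2) * U := by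
        rw [mul_pow, Real.sq_sqrt (by positivity), Real.sq_sqrt hU]
      _ ≤ _ := by gcongr; exact sum_norm_sq_star_mul_add_le s b c p q
  rcases (by positivity : 0 ≤ ‖p‖ ^ 2 + ‖q‖ ^ 2).eq_or_lt with h0 | hpos
  · rw [← h0]; positivity
  · nlinarith

end TwoRow

section ShiftRow

variable {R : Type*} [SeminormedRing R]

/-- The squared spectral norm of the map `x ↦ (x₃, …, x_{n-1}, ∑_{i<n} aᵢ xᵢ)`. -/
def shiftRowNormSq (n : ℕ) (a : ℕ → R) : ℝ :=
  (1 / 2) * (1 + (∑ i ∈ range n, ‖a i‖ ^ 2) +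
    √((1 + (∑ i ∈ range n, ‖a i‖ ^ 2)) ^ 2 - 4 * (‖a 0‖ ^ 2 + ‖a 1‖ ^ 2 + ‖a 2‖ ^ 2)))

lemma shiftRowNormSq_nonneg (n : ℕ) (a : ℕ → R) : 0 ≤ shiftRowNormSq n a := by
  unfold shiftRowNormSq; positivity

theorem sum_Ico_norm_sq_add_norm_sum_sq_le {n : ℕ} (hn : 3 ≤ n) (a x : ℕ → R) :
    ∑ i ∈ Ico 3 n, ‖x i‖ ^ 2 + ‖∑ i ∈ range n, a i * x i‖ ^ 2 ≤
      shiftRowNormSq n a * ∑ i ∈ range n, ‖x i‖ ^ 2 := by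
  set Q := ∑ i ∈ range 3, ‖a i‖ ^ 2
  set P := ∑ i ∈ Ico 3 n, ‖a i‖ ^ 2
  set s := ∑ i ∈ range 3, ‖x i‖ ^ 2
  set t := ∑ i ∈ Ico 3 n, ‖x i‖ ^ 2
  have hQ : 0 ≤ Q := sum_nonneg fun _ _ => sq_nonneg _
  have hP : 0 ≤ P := sum_nonneg fun _ _ => sq_nonneg _
  have hs : 0 ≤ s := sum_nonneg fun _ _ => sq_nonneg _
  have ht : 0 ≤ t := sum_nonneg fun _ _ => sq_nonneg _
  have hw : ‖∑ i ∈ range n, a i * x i‖ ≤ √Q * √s + √P * √t := by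
    rw [← sum_range_add_sum_Ico _ hn]
    exact (norm_add_le _ _).trans (add_le_add (norm_sum_mul_le_sqrt_mul_sqrt _ a x)
      (norm_sum_mul_le_sqrt_mul_sqrt _ a x))
  have hquad := quadForm_le Q (1 + P) (√Q * √P) √s √t
  have hdisc : (Q - (1 + P)) ^ 2 + 4 * (√Q * √P) ^ 2 = (1 + (Q + P)) ^ 2 - 4 * Q := by
    rw [mul_pow, Real.sq_sqrt hQ, Real.sq_sqrt hP]; ring
  rw [hdisc, Real.sq_sqrt hs, Real.sq_sqrt ht] at hquad
  have hw2 : ‖∑ i ∈ range n, a i * x i‖ ^ 2 ≤ (√Q * √s + √P * √t) ^ 2 := by gcongr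
  have hexp : (√Q * √s + √P * √t) ^ 2 = Q * s + P * t + 2 * (√Q * √P) * √s * √t := by
    rw [add_sq, mul_pow, mul_pow, Real.sq_sqrt hQ, Real.sq_sqrt hP, Real.sq_sqrt hs,
      Real.sq_sqrt ht]
    ring
  have hQ3 : ‖a 0‖ ^ 2 + ‖a 1‖ ^ 2 + ‖a 2‖ ^ 2 = Q := by simp [Q, sum_range_succ]
  have hsa : ∑ i ∈ range n, ‖a i‖ ^ 2 = Q + P := (sum_range_add_sum_Ico _ hn).symm
  have hsx : ∑ i ∈ range n, ‖x i‖ ^ 2 = s + t := (sum_range_add_sum_Ico _ hn).symm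
  rw [shiftRowNormSq, hQ3, hsa, hsx]
  linarith

end ShiftRow

theorem pow_succ_eq_sum_shift {R : Type*} [Ring R] {k m : ℕ} {a d : ℕ → R} {z : R}
    (hk : 0 < k) (hz : z ^ k = -∑ i ∈ range k, a i * z ^ i)
    (h : z ^ m = ∑ i ∈ range k, d i * z ^ i) :
    z ^ (m + 1) = ∑ i ∈ range k, ((if i = 0 then 0 else d (i - 1)) - d (k - 1) * a i) * z ^ i := by
  obtain ⟨N, rfl⟩ : ∃ N, k = N + 1 := ⟨k - 1, by omega⟩
  simp only [sub_mul, sum_sub_distrib, mul_assoc, ← mul_sum, ← neg_eq_iff_eq_neg.2 hz]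
  rw [pow_succ, h, sum_mul, sum_range_succ, sum_range_succ']
  simp [mul_assoc, ← pow_succ]

section PolyZero

variable {k : ℕ} {a : ℕ → ℍ[ℝ]} {z : ℍ[ℝ]}

lemma IsPolyZero.pow_eq (hz : IsPolyZero k a z) : z ^ k = -∑ i ∈ range k, a i * z ^ i :=
  eq_neg_of_add_eq_zero_right hz

lemma IsPolyZero.pow_succ_eq_sum_bseq_s17 (hk : 0 < k) (hz : IsPolyZero k a z) :
    z ^ (k + 1) = ∑ i ∈ range k, bseq k a i * z ^ i := by
  rw [pow_succ_eq_sum_shift (d := fun i => -a i) hk hz.pow_eq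
    (by rw [hz.pow_eq, ← sum_neg_distrib]; simp only [neg_mul])]
  refine sum_congr rfl fun i _ => congrArg (· * z ^ i) ?_
  rcases i with _ | i <;> simp [bseq, neg_add_eq_sub]

lemma IsPolyZero.pow_add_two_eq_sum_cseq (hk : 2 ≤ k) (hz : IsPolyZero k a z) :
    z ^ (k + 2) = ∑ i ∈ range k, cseq k a i * z ^ i := by
  rw [pow_succ_eq_sum_shift (by omega) hz.pow_eq (hz.pow_succ_eq_sum_bseq_s17 (by omega))]
  refine sum_congr rfl fun i _ => congrArg (· * z ^ i) ?_
  have hk1 : k - 1 ≠ 0 := by omega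
  have hk2 : k - 1 - 1 = k - 2 := by omega
  rcases i with _ | _ | i <;> simp [bseq, cseq, hk1, hk2] <;> noncomm_ring

end PolyZero

lemma sum_Icc_self_succ {M : Type*} [AddCommMonoid M] (f : ℕ → M) (n : ℕ) :
    ∑ i ∈ Icc n (n + 1), f i = f n + f (n + 1) := by
  rw [← Ico_add_one_right_eq_Icc, sum_Ico_succ_top (by omega), Ico_add_one_right_eq_Icc,
    Icc_self, sum_singleton]

lemma sum_range_add_two {M : Type*} [AddCommMonoid M] (f : ℕ → M) (n : ℕ) :
    ∑ i ∈ range (n + 2), f i = ∑ i ∈ range n, f i + ∑ i ∈ Icc n (n + 1), f i := by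
  rw [sum_Icc_self_succ, sum_range_succ, sum_range_succ, add_assoc]

lemma norm_pow_mul_sqrt_sum_norm_pow_sq {𝕜 : Type*} [NormedDivisionRing 𝕜] (z : 𝕜) (m : ℕ)
    (s : Finset ℕ) :
    ‖z‖ ^ m * √(∑ i ∈ s, ‖z ^ i‖ ^ 2) = √(∑ i ∈ s, ‖z ^ (i + m)‖ ^ 2) := by
  rw [← Real.sqrt_sq (by positivity : 0 ≤ ‖z‖ ^ m), ← Real.sqrt_mul (by positivity), mul_sum]
  simp only [pow_add, norm_mul, norm_pow]
  congr 1
  exact sum_congr rfl fun i _ => by ring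

section Blocks

variable {n : ℕ} {a : ℕ → ℍ[ℝ]} {z : ℍ[ℝ]}

theorem IsPolyZero.norm_pow_three_mul_le_top (hn : 3 ≤ n) (hz : IsPolyZero (n + 2) a z) :
    ‖z‖ ^ 3 * √(∑ i ∈ range n, ‖z ^ i‖ ^ 2) ≤
      √(shiftRowNormSq n a) * √(∑ i ∈ range n, ‖z ^ i‖ ^ 2) +
        √(‖a (n + 1)‖ ^ 2 + ‖a n‖ ^ 2 + 1) * √(∑ i ∈ Icc n (n + 1), ‖z ^ i‖ ^ 2) := by
  set w := ∑ i ∈ range n, a i * z ^ i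
  set w' := a n * z ^ n + a (n + 1) * z ^ (n + 1)
  set T := ∑ i ∈ Ico 3 n, ‖z ^ i‖ ^ 2
  set Y := ‖z ^ n‖ ^ 2 + ‖z ^ (n + 1)‖ ^ 2
  have hT : 0 ≤ T := sum_nonneg fun _ _ => sq_nonneg _
  have hY : 0 ≤ Y := by positivity
  have hzk : z ^ (n + 2) = -(w + w') := by
    rw [hz.pow_eq, sum_range_succ, sum_range_succ, add_assoc]
  have hshift : ∑ i ∈ range n, ‖z ^ (i + 3)‖ ^ 2 = T + Y + ‖w + w'‖ ^ 2 := by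
    rw [range_eq_Ico, sum_Ico_add' (fun i => ‖z ^ i‖ ^ 2), zero_add, sum_Ico_succ_top (by omega),
      sum_Ico_succ_top (by omega), sum_Ico_succ_top (by omega), hzk, norm_neg, add_assoc T]
  have hTY : T + Y ≤ (√T + √Y) ^ 2 := by
    rw [add_sq, Real.sq_sqrt hT, Real.sq_sqrt hY]
    nlinarith [mul_nonneg (Real.sqrt_nonneg T) (Real.sqrt_nonneg Y)]
  have hminkowski := Real.sqrt_add_sq_le hTY (norm_nonneg _) (norm_add_le w w')
  rw [Real.sq_sqrt hT, Real.sq_sqrt hY] at hminkowski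
  rw [norm_pow_mul_sqrt_sum_norm_pow_sq, hshift, sum_Icc_self_succ]
  refine hminkowski.trans (add_le_add ?_ ?_)
  · exact Real.sqrt_le_sqrt_mul_sqrt_of_le_mul (shiftRowNormSq_nonneg n a)
      (sum_Ico_norm_sq_add_norm_sum_sq_le hn a (z ^ ·))
  · exact Real.sqrt_le_sqrt_mul_sqrt_of_le_mul (by positivity)
      (norm_sq_add_norm_sq_add_norm_mul_add_mul_sq_le _ _ _ _)

theorem IsPolyZero.norm_pow_three_mul_le_bottom (hz : IsPolyZero (n + 2) a z) :
    ‖z‖ ^ 3 * √(∑ i ∈ Icc n (n + 1), ‖z ^ i‖ ^ 2) ≤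
      √(twoRowNormSq (range n) (bseq (n + 2) a) (cseq (n + 2) a)) *
          √(∑ i ∈ range n, ‖z ^ i‖ ^ 2) +
        √(twoRowNormSq (Icc n (n + 1)) (bseq (n + 2) a) (cseq (n + 2) a)) *
          √(∑ i ∈ Icc n (n + 1), ‖z ^ i‖ ^ 2) := by
  have hb := hz.pow_succ_eq_sum_bseq_s17 (by omega)
  have hc := hz.pow_add_two_eq_sum_cseq (by omega)
  rw [sum_range_add_two] at hb hc
  rw [norm_pow_mul_sqrt_sum_norm_pow_sq, sum_Icc_self_succ, hb, hc]
  refine (Real.sqrt_add_sq_le (pow_le_pow_left₀ (norm_nonneg _) (norm_add_le _ _) 2)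
    (norm_nonneg _) (norm_add_le _ _)).trans (add_le_add ?_ ?_) <;>
  exact Real.sqrt_le_sqrt_mul_sqrt_of_le_mul (twoRowNormSq_nonneg _ _ _)
    (norm_sq_add_norm_sq_le_twoRowNormSq _ _ _ _)

end Blocks

theorem zero_bound_three (k : ℕ) (hk : 5 ≤ k) (a : ℕ → ℍ[ℝ]) (z : ℍ[ℝ])
    (hz : IsPolyZero k a z) :
    ‖z‖ ≤ ((1 / 2) *
      ((Real.sqrt ((1 / 2) * ((∑ i ∈ Finset.Icc (k - 2) (k - 1), (‖bseq k a i‖ ^ 2 + ‖cseq k a i‖ ^ 2)) +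
          Real.sqrt ((∑ i ∈ Finset.Icc (k - 2) (k - 1), (‖bseq k a i‖ ^ 2 - ‖cseq k a i‖ ^ 2)) ^ 2 +
            4 * ‖∑ i ∈ Finset.Icc (k - 2) (k - 1), bseq k a i * star (cseq k a i)‖ ^ 2)))) +
       (Real.sqrt ((1 / 2) * (1 + (∑ i ∈ Finset.range (k - 2), ‖a i‖ ^ 2) +
          Real.sqrt ((1 + (∑ i ∈ Finset.range (k - 2), ‖a i‖ ^ 2)) ^ 2 -
            4 * (‖a 0‖ ^ 2 + ‖a 1‖ ^ 2 + ‖a 2‖ ^ 2))))) +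
       Real.sqrt (((Real.sqrt ((1 / 2) * ((∑ i ∈ Finset.Icc (k - 2) (k - 1), (‖bseq k a i‖ ^ 2 + ‖cseq k a i‖ ^ 2)) +
            Real.sqrt ((∑ i ∈ Finset.Icc (k - 2) (k - 1), (‖bseq k a i‖ ^ 2 - ‖cseq k a i‖ ^ 2)) ^ 2 +
              4 * ‖∑ i ∈ Finset.Icc (k - 2) (k - 1), bseq k a i * star (cseq k a i)‖ ^ 2)))) -
          (Real.sqrt ((1 / 2) * (1 + (∑ i ∈ Finset.range (k - 2), ‖a i‖ ^ 2) +
            Real.sqrt ((1 + (∑ i ∈ Finset.range (k - 2), ‖a i‖ ^ 2)) ^ 2 -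
              4 * (‖a 0‖ ^ 2 + ‖a 1‖ ^ 2 + ‖a 2‖ ^ 2)))))) ^ 2 +
         4 * Real.sqrt (‖a (k - 1)‖ ^ 2 + ‖a (k - 2)‖ ^ 2 + 1) *
           Real.sqrt ((1 / 2) * ((∑ i ∈ Finset.range (k - 2), (‖bseq k a i‖ ^ 2 + ‖cseq k a i‖ ^ 2)) +
            Real.sqrt ((∑ i ∈ Finset.range (k - 2), (‖bseq k a i‖ ^ 2 - ‖cseq k a i‖ ^ 2)) ^ 2 +
              4 * ‖∑ i ∈ Finset.range (k - 2), bseq k a i * star (cseq k a i)‖ ^ 2))))))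
      ^ ((1 : ℝ) / 3) := by
  obtain ⟨n, rfl⟩ : ∃ n, k = n + 2 := ⟨k - 2, by omega⟩
  have hα : 0 < √(∑ i ∈ range n, ‖z ^ i‖ ^ 2) := Real.sqrt_pos.2 <|
    (by simp : (0 : ℝ) < ‖z ^ 0‖ ^ 2).trans_le
      (single_le_sum (fun i _ => sq_nonneg ‖z ^ i‖) (mem_range.2 (by omega)))
  have hρ := le_perronRoot hα (Real.sqrt_nonneg _) (Real.sqrt_nonneg _)
    (hz.norm_pow_three_mul_le_top (by omega)) hz.norm_pow_three_mul_le_bottom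
  calc ‖z‖ = (‖z‖ ^ 3) ^ ((1 : ℝ) / 3) := by
        rw [← Real.rpow_natCast, ← Real.rpow_mul (norm_nonneg z)]; norm_num
    _ ≤ _ := Real.rpow_le_rpow (by positivity) hρ (by norm_num)
end
end
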